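/- arXiv:quant-ph/0202121 — 3 statements merged into one kernel-verified Lean document; each statement's English description precedes it below -/
import Mathlib

section
/- Let ψ and ω be unit vectors in ℂ^{d₁} ⊗ ℂ^{d₂} with Schmidt coefficients (pᵢ) and (qⱼ) respectively, and let S = |ψ⟩⟨ω| be the corresponding rank-one operator. Then ‖S‖_γ = Σ_{i,j} √(pᵢ qⱼ) = (Σᵢ √pᵢ)·(Σⱼ √qⱼ). -/
open scoped Matrix Kronecker BigOperators ComplexOrder
open MeasureTheory

/-- Trace norm of a complex square matrix: `tr √(AᴴA)` (the sum of singular values). -/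
noncomputable def traceNorm {n : Type*} [Fintype n] [DecidableEq n] (A : Matrix n n ℂ) : ℝ :=
  (((Matrix.posSemidef_conjTranspose_mul_self A).1.eigenvectorUnitary.1 *
    Matrix.diagonal (fun i => ((Real.sqrt ((Matrix.posSemidef_conjTranspose_mul_self A).1.eigenvalues i) : ℝ) : ℂ)) *
    (star (Matrix.posSemidef_conjTranspose_mul_self A).1.eigenvectorUnitary : Matrix n n ℂ)).trace).re

/-- The greatest cross norm `‖·‖_γ` of an operator on `ℂ^{d₁} ⊗ ℂ^{d₂}`: the infimum of
`Σᵢ ‖uᵢ‖₁ ‖vᵢ‖₁` over all finite decompositions `T = Σᵢ uᵢ ⊗ vᵢ` into Kronecker products. -/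
noncomputable def gcn {d₁ d₂ : ℕ} (T : Matrix (Fin d₁ × Fin d₂) (Fin d₁ × Fin d₂) ℂ) : ℝ :=
  sInf { r : ℝ | ∃ (n : ℕ) (u : Fin n → Matrix (Fin d₁) (Fin d₁) ℂ)
      (v : Fin n → Matrix (Fin d₂) (Fin d₂) ℂ),
      T = ∑ i, u i ⊗ₖ v i ∧ r = ∑ i, traceNorm (u i) * traceNorm (v i) }

/-- A density matrix: positive semidefinite with trace one. -/
def IsDensityMatrix {n : Type*} [Fintype n] (ρ : Matrix n n ℂ) : Prop :=
  ρ.PosSemidef ∧ ρ.trace = 1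

/-- Separability of a state on `ℂ^{d₁} ⊗ ℂ^{d₂}`: a finite convex-type combination
`ρ = Σᵢ ωᵢ ρᵢ⁽¹⁾ ⊗ ρᵢ⁽²⁾` of Kronecker products of density matrices, with `ωᵢ ≥ 0`. -/
def IsSeparable' {d₁ d₂ : ℕ} (ρ : Matrix (Fin d₁ × Fin d₂) (Fin d₁ × Fin d₂) ℂ) : Prop :=
  ∃ (n : ℕ) (ω : Fin n → ℝ) (ρ₁ : Fin n → Matrix (Fin d₁) (Fin d₁) ℂ)
    (ρ₂ : Fin n → Matrix (Fin d₂) (Fin d₂) ℂ),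
    (∀ i, 0 ≤ ω i) ∧ (∀ i, IsDensityMatrix (ρ₁ i)) ∧ (∀ i, IsDensityMatrix (ρ₂ i)) ∧
    ρ = ∑ i, (ω i : ℂ) • (ρ₁ i ⊗ₖ ρ₂ i)

/-- The realignment map `𝔄`: `𝔄(ρ)_{(i,j),(k,l)} = ρ_{(i,k),(j,l)}`. -/
def realign {d : ℕ} (ρ : Matrix (Fin d × Fin d) (Fin d × Fin d) ℂ) :
    Matrix (Fin d × Fin d) (Fin d × Fin d) ℂ :=
  Matrix.of fun p q => ρ (p.1, q.1) (p.2, q.2)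

/-- `τ(𝔄(ρ))`: the trace norm of the realignment of `ρ`. -/
noncomputable def tauRealign {d : ℕ} (ρ : Matrix (Fin d × Fin d) (Fin d × Fin d) ℂ) : ℝ :=
  traceNorm (realign ρ)

/-- The flip operator `𝔽 = Σ_{i,j} |i⊗j⟩⟨j⊗i|` on `ℂ^d ⊗ ℂ^d`. -/
def flipOp (d : ℕ) : Matrix (Fin d × Fin d) (Fin d × Fin d) ℂ :=
  Matrix.of fun p q => if p.1 = q.2 ∧ p.2 = q.1 then 1 else 0

/-- The Werner state `ρ_f = (1/(d³−d))((d−f) I + (df−1) 𝔽)` on `ℂ^d ⊗ ℂ^d`. -/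
noncomputable def wernerState (d : ℕ) (f : ℝ) : Matrix (Fin d × Fin d) (Fin d × Fin d) ℂ :=
  (((d : ℂ) ^ 3 - d)⁻¹) • (((d : ℂ) - (f : ℂ)) • (1 : Matrix (Fin d × Fin d) (Fin d × Fin d) ℂ)
    + ((d : ℂ) * (f : ℂ) - 1) • flipOp d)

/-- The maximally entangled vector `|Ψ⁺⟩ = (1/√d) Σᵢ |i⊗i⟩` on `ℂ^d ⊗ ℂ^d`. -/
noncomputable def psiPlus (d : ℕ) : Fin d × Fin d → ℂ :=
  fun p => if p.1 = p.2 then ((1 / Real.sqrt d : ℝ) : ℂ) else 0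

/-- The isotropic state `ρ_F = ((1−F)/(d²−1))(I − |Ψ⁺⟩⟨Ψ⁺|) + F |Ψ⁺⟩⟨Ψ⁺|` on `ℂ^d ⊗ ℂ^d`. -/
noncomputable def isotropicState (d : ℕ) (F : ℝ) : Matrix (Fin d × Fin d) (Fin d × Fin d) ℂ :=
  (((1 - F : ℝ) : ℂ) / ((d : ℂ) ^ 2 - 1)) •
      ((1 : Matrix (Fin d × Fin d) (Fin d × Fin d) ℂ)
        - Matrix.vecMulVec (psiPlus d) (star (psiPlus d)))
    + ((F : ℝ) : ℂ) • Matrix.vecMulVec (psiPlus d) (star (psiPlus d))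

section AuxAll
open Matrix Complex
local notation "conj'" => starRingEnd ℂ



variable {n : Type*} [Fintype n] [DecidableEq n]

lemma trace_unitary_conj {A : Matrix n n ℂ} (hA : A.IsHermitian) (f : n → ℂ) :
    ((hA.eigenvectorUnitary : Matrix n n ℂ) * Matrix.diagonal f *
      (star hA.eigenvectorUnitary : Matrix n n ℂ)).trace = ∑ i, f i := by
  rw [Matrix.trace_mul_cycle, Unitary.coe_star_mul_self, Matrix.one_mul,
    Matrix.trace_diagonal]

lemma traceNorm_eq_sum_sqrt (A : Matrix n n ℂ) :
    traceNorm A = ∑ i, Real.sqrt ((Matrix.isHermitian_conjTranspose_mul_self A).eigenvalues i) := by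
  unfold traceNorm
  rw [trace_unitary_conj, Complex.re_sum]
  simp

lemma traceNorm_nonneg (A : Matrix n n ℂ) : 0 ≤ traceNorm A := by
  rw [traceNorm_eq_sum_sqrt]
  exact Finset.sum_nonneg fun i _ => Real.sqrt_nonneg _

lemma re_trace_conjTranspose_mul_self (A : Matrix n n ℂ) :
    ((Aᴴ * A).trace).re = ∑ i, (Matrix.isHermitian_conjTranspose_mul_self A).eigenvalues i := by
  conv_lhs => rw [(Matrix.isHermitian_conjTranspose_mul_self A).spectral_theorem]
  rw [Unitary.conjStarAlgAut_apply, trace_unitary_conj (Matrix.isHermitian_conjTranspose_mul_self A), Complex.re_sum]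
  simp

lemma frobSq_eq (A : Matrix n n ℂ) :
    ((Aᴴ * A).trace).re = ∑ k, ∑ l, ‖A k l‖ ^ 2 := by
  have hz : ∀ z : ℂ, (star z * z).re = ‖z‖ ^ 2 := fun z => by
    rw [RCLike.star_def, mul_comm, Complex.mul_conj, Complex.ofReal_re,
      Complex.normSq_eq_norm_sq]
  simp only [Matrix.trace, Matrix.diag, Matrix.mul_apply, Matrix.conjTranspose_apply]
  rw [Complex.re_sum, Finset.sum_comm]
  refine Finset.sum_congr rfl fun k _ => ?_
  rw [Complex.re_sum]
  exact Finset.sum_congr rfl fun l _ => hz _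

lemma frobSq_le_traceNorm_sq (A : Matrix n n ℂ) :
    ∑ k, ∑ l, ‖A k l‖ ^ 2 ≤ traceNorm A ^ 2 := by
  rw [← frobSq_eq, re_trace_conjTranspose_mul_self, traceNorm_eq_sum_sqrt]
  calc ∑ i, (Matrix.isHermitian_conjTranspose_mul_self A).eigenvalues i
      = ∑ i, Real.sqrt ((Matrix.isHermitian_conjTranspose_mul_self A).eigenvalues i) ^ 2 := by
        refine Finset.sum_congr rfl fun i _ => ?_
        rw [Real.sq_sqrt ((Matrix.posSemidef_conjTranspose_mul_self A).eigenvalues_nonneg i)]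
    _ ≤ (∑ i, Real.sqrt ((Matrix.isHermitian_conjTranspose_mul_self A).eigenvalues i)) ^ 2 :=
        Finset.sum_sq_le_sq_sum_of_nonneg fun i _ => Real.sqrt_nonneg _




lemma bessel_coord {m d : ℕ} (c : Fin m → Fin d → ℂ)
    (hc : ∀ i j, ∑ k, conj' (c i k) * c j k = if i = j then 1 else 0)
    (w : Fin d → ℂ) :
    ∑ j, ‖∑ l, conj' (c j l) * w l‖ ^ 2 ≤ ∑ l, ‖w l‖ ^ 2 := by
  let v : Fin m → EuclideanSpace ℂ (Fin d) := fun j => WithLp.toLp 2 (c j)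
  have hv : Orthonormal ℂ v := by
    rw [orthonormal_iff_ite]
    intro i j
    simpa [v, PiLp.inner_apply, RCLike.inner_apply, mul_comm] using hc i j
  let w' : EuclideanSpace ℂ (Fin d) := WithLp.toLp 2 w
  have hw : ‖w'‖ ^ 2 = ∑ l, ‖w l‖ ^ 2 := by
    rw [EuclideanSpace.norm_eq, Real.sq_sqrt (by positivity)]
  calc ∑ j, ‖∑ l, conj' (c j l) * w l‖ ^ 2
      = ∑ j ∈ Finset.univ,
        ‖(inner ℂ (v j) w' : ℂ)‖ ^ 2 := by
        refine Finset.sum_congr rfl fun j _ => ?_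
        simp [PiLp.inner_apply, RCLike.inner_apply, v, w', mul_comm]
    _ ≤ ‖w'‖ ^ 2 := hv.sum_inner_products_le _
    _ = _ := hw

lemma compress_le {m₁ m₂ d₁ d₂ : ℕ} (a : Fin m₁ → Fin d₁ → ℂ) (c : Fin m₂ → Fin d₂ → ℂ)
    (ha : ∀ i j, ∑ k, conj' (a i k) * a j k = if i = j then 1 else 0)
    (hc : ∀ i j, ∑ k, conj' (c i k) * c j k = if i = j then 1 else 0)
    (u : Matrix (Fin d₁) (Fin d₂) ℂ) :
    ∑ i, ∑ j, ‖∑ k, ∑ l, conj' (a i k) * u k l * c j l‖ ^ 2 ≤ ∑ k, ∑ l, ‖u k l‖ ^ 2 := by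
  rw [Finset.sum_comm]
  have step1 : ∀ j : Fin m₂, ∑ i, ‖∑ k, ∑ l, conj' (a i k) * u k l * c j l‖ ^ 2 ≤
      ∑ k, ‖∑ l, u k l * c j l‖ ^ 2 := by
    intro j
    have := bessel_coord a ha (fun k => ∑ l, u k l * c j l)
    refine le_trans (le_of_eq ?_) this
    refine Finset.sum_congr rfl fun i _ => ?_
    congr 2
    refine Finset.sum_congr rfl fun k _ => ?_
    rw [Finset.mul_sum]
    refine Finset.sum_congr rfl fun l _ => by ring
  refine le_trans (Finset.sum_le_sum fun j _ => step1 j) ?_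
  rw [Finset.sum_comm]
  refine Finset.sum_le_sum fun k _ => ?_
  have := bessel_coord c hc (fun l => conj' (u k l))
  refine le_trans (le_of_eq ?_) (le_trans this (by simp))
  refine Finset.sum_congr rfl fun j _ => ?_
  rw [show (∑ l, conj' (c j l) * conj' (u k l)) = conj' (∑ l, u k l * c j l) by
      rw [_root_.map_sum]; exact Finset.sum_congr rfl fun l _ => by rw [_root_.map_mul]; ring]
  rw [RCLike.norm_conj]


lemma posSemidef_vecMulVec_self {d : ℕ} (y : Fin d → ℂ) :
    (Matrix.vecMulVec y (star y)).PosSemidef := by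
  rw [Matrix.vecMulVec_eq (Fin 1), ← Matrix.conjTranspose_replicateCol]
  exact Matrix.posSemidef_self_mul_conjTranspose _

lemma posSemidef_real_smul {d : ℕ} {N : Matrix (Fin d) (Fin d) ℂ} (hN : N.PosSemidef)
    {r : ℝ} (hr : 0 ≤ r) : ((r : ℂ) • N).PosSemidef := by
  exact hN.smul (by rw [Complex.zero_le_real]; exact hr)

lemma vecMulVec_mul_vecMulVec {d₁ d₂ : ℕ} (x : Fin d₁ → ℂ) (y : Fin d₂ → ℂ)
    (hx : ∑ k, conj' (x k) * x k = 1) :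
    Matrix.vecMulVec y (star x) * Matrix.vecMulVec x (star y) =
      Matrix.vecMulVec y (star y) := by
  ext k l
  simp only [Matrix.mul_apply, Matrix.vecMulVec_apply, Pi.star_apply, RCLike.star_def]
  calc ∑ m, y k * conj' (x m) * (x m * conj' (y l))
      = (∑ m, conj' (x m) * x m) * (y k * conj' (y l)) := by
        rw [Finset.sum_mul]; exact Finset.sum_congr rfl fun m _ => by ring
    _ = y k * conj' (y l) := by rw [hx, one_mul]

lemma traceNorm_smul_vecMulVec {d : ℕ} (r : ℝ) (hr : 0 ≤ r)
    (x y : Fin d → ℂ)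
    (hx : ∑ k, conj' (x k) * x k = 1) (hy : ∑ k, conj' (y k) * y k = 1) :
    traceNorm ((r : ℂ) • Matrix.vecMulVec x (star y)) = r := by
  set M : Matrix (Fin d) (Fin d) ℂ := (r : ℂ) • Matrix.vecMulVec x (star y) with hM
  set N : Matrix (Fin d) (Fin d) ℂ := Matrix.vecMulVec y (star y) with hN
  set B : Matrix (Fin d) (Fin d) ℂ := (r : ℂ) • N with hB
  have hNN : N * N = N := vecMulVec_mul_vecMulVec y y hy
  have hBpsd : B.PosSemidef := posSemidef_real_smul (posSemidef_vecMulVec_self y) hr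
  have hMH : Mᴴ = (r : ℂ) • Matrix.vecMulVec y (star x) := by
    rw [hM, Matrix.conjTranspose_smul]
    congr 1
    · simp
    · ext k l
      simp [Matrix.conjTranspose_apply, Matrix.vecMulVec_apply, mul_comm]
  have hsq : B ^ 2 = Mᴴ * M := by
    rw [pow_two, hB, hM, hMH, smul_mul_assoc, smul_mul_assoc, mul_smul_comm, mul_smul_comm,
      smul_smul, smul_smul, hNN, vecMulVec_mul_vecMulVec x y hx]
  have hid : B = ((Matrix.posSemidef_conjTranspose_mul_self M).1.eigenvectorUnitary.1 *
      Matrix.diagonal (fun i => ((Real.sqrt ((Matrix.posSemidef_conjTranspose_mul_self M).1.eigenvalues i) : ℝ) : ℂ)) *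
      (star (Matrix.posSemidef_conjTranspose_mul_self M).1.eigenvectorUnitary : Matrix (Fin d) (Fin d) ℂ)) := by
    open scoped MatrixOrder in
    calc B = CFC.sqrt (B ^ 2) := (CFC.sqrt_sq B hBpsd.nonneg).symm
      _ = CFC.sqrt (Mᴴ * M) := by rw [hsq]
      _ = cfc Real.sqrt (Mᴴ * M) := by
          rw [CFC.sqrt_eq_real_sqrt _ (Matrix.posSemidef_conjTranspose_mul_self M).nonneg,
            cfcₙ_eq_cfc (by fun_prop) (by simp)]
      _ = _ := by
          rw [(Matrix.posSemidef_conjTranspose_mul_self M).1.cfc_eq, Matrix.IsHermitian.cfc,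
            Unitary.conjStarAlgAut_apply]
          rfl
  have : traceNorm M = (B.trace).re := by rw [traceNorm, ← hid]
  rw [this, hB, Matrix.trace_smul, hN]
  have hNtr : N.trace = 1 := by
    rw [hN, Matrix.trace]
    simp only [Matrix.diag_apply, Matrix.vecMulVec_apply, Pi.star_apply, RCLike.star_def]
    rw [← hy]
    exact Finset.sum_congr rfl fun k _ => mul_comm _ _
  rw [← hN, hNtr]
  simp



lemma inner_schmidt {m d₁ d₂ : ℕ} (p : Fin m → ℝ) (a : Fin m → Fin d₁ → ℂ)
    (b : Fin m → Fin d₂ → ℂ)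
    (ha : ∀ i j, ∑ k, conj' (a i k) * a j k = if i = j then 1 else 0)
    (hb : ∀ i j, ∑ k, conj' (b i k) * b j k = if i = j then 1 else 0) (i : Fin m) :
    ∑ x : Fin d₁ × Fin d₂, conj' (a i x.1 * b i x.2) *
      (∑ i', ((Real.sqrt (p i') : ℝ) : ℂ) * a i' x.1 * b i' x.2)
      = ((Real.sqrt (p i) : ℝ) : ℂ) := by
  have key : ∀ i', ∑ x : Fin d₁ × Fin d₂, conj' (a i x.1 * b i x.2) *
      (((Real.sqrt (p i') : ℝ) : ℂ) * a i' x.1 * b i' x.2)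
      = ((Real.sqrt (p i') : ℝ) : ℂ) *
        ((∑ k, conj' (a i k) * a i' k) * (∑ l, conj' (b i l) * b i' l)) := by
    intro i'
    rw [Fintype.sum_prod_type, Finset.sum_mul_sum, Finset.mul_sum]
    refine Finset.sum_congr rfl fun k _ => ?_
    rw [Finset.mul_sum]
    refine Finset.sum_congr rfl fun l _ => ?_
    rw [_root_.map_mul]
    ring
  simp only [Finset.mul_sum]
  rw [Finset.sum_comm]
  calc ∑ i', ∑ x : Fin d₁ × Fin d₂, conj' (a i x.1 * b i x.2) *
        (((Real.sqrt (p i') : ℝ) : ℂ) * a i' x.1 * b i' x.2)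
      = ∑ i', ((Real.sqrt (p i') : ℝ) : ℂ) *
        ((if i = i' then (1:ℂ) else 0) * (if i = i' then (1:ℂ) else 0)) := by
        refine Finset.sum_congr rfl fun i' _ => ?_
        rw [key i', ha, hb]
    _ = ((Real.sqrt (p i) : ℝ) : ℂ) := by
        simp [Finset.sum_ite_eq, mul_ite]

lemma inner_schmidt' {m d₁ d₂ : ℕ} (q : Fin m → ℝ) (c : Fin m → Fin d₁ → ℂ)
    (e : Fin m → Fin d₂ → ℂ)
    (hc : ∀ i j, ∑ k, conj' (c i k) * c j k = if i = j then 1 else 0)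
    (he : ∀ i j, ∑ k, conj' (e i k) * e j k = if i = j then 1 else 0) (j : Fin m) :
    ∑ y : Fin d₁ × Fin d₂, conj' (∑ j', ((Real.sqrt (q j') : ℝ) : ℂ) * c j' y.1 * e j' y.2) *
      (c j y.1 * e j y.2) = ((Real.sqrt (q j) : ℝ) : ℂ) := by
  have h := inner_schmidt q c e hc he j
  calc ∑ y : Fin d₁ × Fin d₂, conj' (∑ j', ((Real.sqrt (q j') : ℝ) : ℂ) * c j' y.1 * e j' y.2) *
        (c j y.1 * e j y.2)
      = conj' (∑ y : Fin d₁ × Fin d₂, conj' (c j y.1 * e j y.2) *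
          (∑ j', ((Real.sqrt (q j') : ℝ) : ℂ) * c j' y.1 * e j' y.2)) := by
        rw [_root_.map_sum]
        refine Finset.sum_congr rfl fun y _ => ?_
        rw [_root_.map_mul, Complex.conj_conj]
        ring
    _ = ((Real.sqrt (q j) : ℝ) : ℂ) := by rw [h, Complex.conj_ofReal]



end AuxAll

/-- For unit vectors `ψ`, `ω` with Schmidt coefficients `(pᵢ)` and `(qⱼ)`, the greatest cross
norm of `S = |ψ⟩⟨ω|` equals `Σ_{i,j} √(pᵢ qⱼ) = (Σᵢ √pᵢ)(Σⱼ √qⱼ)`. -/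
theorem gcn_rank_one (d₁ d₂ m₁ m₂ : ℕ)
    (p : Fin m₁ → ℝ) (q : Fin m₂ → ℝ)
    (hp : ∀ i, 0 ≤ p i) (hq : ∀ j, 0 ≤ q j)
    (hps : ∑ i, p i = 1) (hqs : ∑ j, q j = 1)
    (a : Fin m₁ → Fin d₁ → ℂ) (b : Fin m₁ → Fin d₂ → ℂ)
    (c : Fin m₂ → Fin d₁ → ℂ) (e : Fin m₂ → Fin d₂ → ℂ)
    (ha : ∀ i j, ∑ k, (starRingEnd ℂ) (a i k) * a j k = if i = j then 1 else 0)
    (hb : ∀ i j, ∑ k, (starRingEnd ℂ) (b i k) * b j k = if i = j then 1 else 0)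
    (hc : ∀ i j, ∑ k, (starRingEnd ℂ) (c i k) * c j k = if i = j then 1 else 0)
    (he : ∀ i j, ∑ k, (starRingEnd ℂ) (e i k) * e j k = if i = j then 1 else 0)
    (ψ ω : Fin d₁ × Fin d₂ → ℂ)
    (hψ : ψ = fun x => ∑ i, ((Real.sqrt (p i) : ℝ) : ℂ) * a i x.1 * b i x.2)
    (hω : ω = fun x => ∑ j, ((Real.sqrt (q j) : ℝ) : ℂ) * c j x.1 * e j x.2) :
    gcn (Matrix.vecMulVec ψ (star ω)) = ∑ i, ∑ j, Real.sqrt (p i * q j) ∧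
    gcn (Matrix.vecMulVec ψ (star ω)) =
      (∑ i, Real.sqrt (p i)) * (∑ j, Real.sqrt (q j)) := by
  classical
  have sqrtpq : ∀ (i : Fin m₁) (j : Fin m₂),
      Real.sqrt (p i * q j) = Real.sqrt (p i) * Real.sqrt (q j) := fun i j =>
    Real.sqrt_mul (hp i) _
  set T : Matrix (Fin d₁ × Fin d₂) (Fin d₁ × Fin d₂) ℂ := Matrix.vecMulVec ψ (star ω) with hTdef
  set F : ℝ := ∑ i, ∑ j, Real.sqrt (p i * q j) with hFdef
  -- upper bound data
  set σ : Fin m₁ × Fin m₂ ≃ Fin (m₁ * m₂) := finProdFinEquiv with hσ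
  set U : Fin (m₁ * m₂) → Matrix (Fin d₁) (Fin d₁) ℂ := fun t =>
    ((Real.sqrt (p (σ.symm t).1 * q (σ.symm t).2) : ℝ) : ℂ) •
      Matrix.vecMulVec (a (σ.symm t).1) (star (c (σ.symm t).2)) with hU
  set V : Fin (m₁ * m₂) → Matrix (Fin d₂) (Fin d₂) ℂ := fun t =>
    Matrix.vecMulVec (b (σ.symm t).1) (star (e (σ.symm t).2)) with hV
  have hdecomp : T = ∑ t, U t ⊗ₖ V t := by
    have h1 : T = ∑ z : Fin m₁ × Fin m₂,
        (((Real.sqrt (p z.1 * q z.2) : ℝ) : ℂ) •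
          Matrix.vecMulVec (a z.1) (star (c z.2))) ⊗ₖ
          Matrix.vecMulVec (b z.1) (star (e z.2)) := by
      ext x y
      rw [hTdef]
      simp only [Matrix.sum_apply, Matrix.smul_kronecker, Matrix.smul_apply,
        Matrix.kroneckerMap_apply, Matrix.vecMulVec_apply, Pi.star_apply, RCLike.star_def,
        smul_eq_mul, Fintype.sum_prod_type]
      rw [hψ, hω]
      rw [_root_.map_sum, Finset.sum_mul_sum]
      refine Finset.sum_congr rfl fun i _ => Finset.sum_congr rfl fun j _ => ?_
      rw [sqrtpq i j, Complex.ofReal_mul]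
      simp only [_root_.map_mul, Complex.conj_ofReal]
      ring
    rw [h1, ← Equiv.sum_comp σ.symm
      (fun z : Fin m₁ × Fin m₂ =>
        (((Real.sqrt (p z.1 * q z.2) : ℝ) : ℂ) •
          Matrix.vecMulVec (a z.1) (star (c z.2))) ⊗ₖ
          Matrix.vecMulVec (b z.1) (star (e z.2)))]
  have hval : F = ∑ t, traceNorm (U t) * traceNorm (V t) := by
    have h2 : F = ∑ t, Real.sqrt (p (σ.symm t).1 * q (σ.symm t).2) := by
      rw [hFdef, ← Fintype.sum_prod_type (f := fun z : Fin m₁ × Fin m₂ => Real.sqrt (p z.1 * q z.2)),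
        ← Equiv.sum_comp σ.symm (fun z : Fin m₁ × Fin m₂ => Real.sqrt (p z.1 * q z.2))]
    rw [h2]
    refine Finset.sum_congr rfl fun t _ => ?_
    have h1 : traceNorm (U t) = Real.sqrt (p (σ.symm t).1 * q (σ.symm t).2) :=
      traceNorm_smul_vecMulVec _ (Real.sqrt_nonneg _) _ _
        (by simpa using ha (σ.symm t).1 (σ.symm t).1)
        (by simpa using hc (σ.symm t).2 (σ.symm t).2)
    have h2' : traceNorm (V t) = 1 := by
      have h := traceNorm_smul_vecMulVec 1 zero_le_one (b (σ.symm t).1) (e (σ.symm t).2)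
        (by simpa using hb (σ.symm t).1 (σ.symm t).1)
        (by simpa using he (σ.symm t).2 (σ.symm t).2)
      rwa [Complex.ofReal_one, one_smul] at h
    rw [h1, h2', mul_one]
  have hmem : F ∈ { r : ℝ | ∃ (n : ℕ) (u : Fin n → Matrix (Fin d₁) (Fin d₁) ℂ)
      (v : Fin n → Matrix (Fin d₂) (Fin d₂) ℂ),
      T = ∑ i, u i ⊗ₖ v i ∧ r = ∑ i, traceNorm (u i) * traceNorm (v i) } :=
    ⟨m₁ * m₂, U, V, hdecomp, hval⟩
  have hlow : ∀ r ∈ { r : ℝ | ∃ (n : ℕ) (u : Fin n → Matrix (Fin d₁) (Fin d₁) ℂ)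
      (v : Fin n → Matrix (Fin d₂) (Fin d₂) ℂ),
      T = ∑ i, u i ⊗ₖ v i ∧ r = ∑ i, traceNorm (u i) * traceNorm (v i) }, F ≤ r := by
    rintro r ⟨N, u, v, hdec, hrval⟩
    set α : Fin N → Fin m₁ → Fin m₂ → ℂ := fun t i j =>
      ∑ k, ∑ l, (starRingEnd ℂ) (a i k) * u t k l * c j l with hα
    set β : Fin N → Fin m₁ → Fin m₂ → ℂ := fun t i j =>
      ∑ k, ∑ l, (starRingEnd ℂ) (b i k) * v t k l * e j l with hβ
    have hTentry : ∀ x y : Fin d₁ × Fin d₂, T x y = ∑ t, u t x.1 y.1 * v t x.2 y.2 := by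
      intro x y
      rw [hdec]
      simp [Matrix.sum_apply, Matrix.kroneckerMap_apply]
    have claimA : ∀ (i : Fin m₁) (j : Fin m₂),
        ∑ t, α t i j * β t i j = ((Real.sqrt (p i) * Real.sqrt (q j) : ℝ) : ℂ) := by
      intro i j
      have expand : ∀ t, α t i j * β t i j = ∑ x : Fin d₁ × Fin d₂, ∑ y : Fin d₁ × Fin d₂,
          (starRingEnd ℂ) (a i x.1 * b i x.2) * (u t x.1 y.1 * v t x.2 y.2) *
            (c j y.1 * e j y.2) := by
        intro t
        rw [hα, hβ]
        simp only [Fintype.sum_prod_type]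
        rw [Finset.sum_mul_sum]
        refine Finset.sum_congr rfl fun k _ => Finset.sum_congr rfl fun m _ => ?_
        rw [Finset.sum_mul_sum]
        refine Finset.sum_congr rfl fun l _ => Finset.sum_congr rfl fun n _ => ?_
        rw [_root_.map_mul]
        ring
      calc ∑ t, α t i j * β t i j
          = ∑ t, ∑ x : Fin d₁ × Fin d₂, ∑ y : Fin d₁ × Fin d₂,
            (starRingEnd ℂ) (a i x.1 * b i x.2) * (u t x.1 y.1 * v t x.2 y.2) *
              (c j y.1 * e j y.2) := Finset.sum_congr rfl fun t _ => expand t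
        _ = ∑ x : Fin d₁ × Fin d₂, ∑ y : Fin d₁ × Fin d₂,
            (starRingEnd ℂ) (a i x.1 * b i x.2) * T x y * (c j y.1 * e j y.2) := by
            rw [Finset.sum_comm]
            refine Finset.sum_congr rfl fun x _ => ?_
            rw [Finset.sum_comm]
            refine Finset.sum_congr rfl fun y _ => ?_
            rw [hTentry x y, Finset.mul_sum, Finset.sum_mul]
        _ = (∑ x : Fin d₁ × Fin d₂, (starRingEnd ℂ) (a i x.1 * b i x.2) * ψ x) *
            (∑ y : Fin d₁ × Fin d₂, (starRingEnd ℂ) (ω y) * (c j y.1 * e j y.2)) := by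
            rw [Finset.sum_mul_sum]
            refine Finset.sum_congr rfl fun x _ => Finset.sum_congr rfl fun y _ => ?_
            rw [hTdef]
            simp only [Matrix.vecMulVec_apply, Pi.star_apply, RCLike.star_def]
            ring
        _ = ((Real.sqrt (p i) : ℝ) : ℂ) * ((Real.sqrt (q j) : ℝ) : ℂ) := by
            simp only [hψ, hω]
            rw [inner_schmidt p a b ha hb i, inner_schmidt' q c e hc he j]
        _ = ((Real.sqrt (p i) * Real.sqrt (q j) : ℝ) : ℂ) := by push_cast; ring
    have hFC : (F : ℂ) = ∑ t, ∑ i, ∑ j, α t i j * β t i j := by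
      calc (F : ℂ) = ∑ i, ∑ j, ((Real.sqrt (p i) * Real.sqrt (q j) : ℝ) : ℂ) := by
            rw [hFdef]
            push_cast
            exact Finset.sum_congr rfl fun i _ => Finset.sum_congr rfl fun j _ => by
              rw [sqrtpq i j]; push_cast; ring
        _ = ∑ i, ∑ j, ∑ t, α t i j * β t i j :=
            Finset.sum_congr rfl fun i _ => Finset.sum_congr rfl fun j _ => (claimA i j).symm
        _ = ∑ i, ∑ t, ∑ j, α t i j * β t i j :=
            Finset.sum_congr rfl fun i _ => Finset.sum_comm
        _ = ∑ t, ∑ i, ∑ j, α t i j * β t i j := Finset.sum_comm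
    have per : ∀ t, ‖∑ i, ∑ j, α t i j * β t i j‖ ≤ traceNorm (u t) * traceNorm (v t) := by
      intro t
      have hstep1 : ‖∑ i, ∑ j, α t i j * β t i j‖ ≤ ∑ i, ∑ j, ‖α t i j‖ * ‖β t i j‖ :=
        (norm_sum_le _ _).trans (Finset.sum_le_sum fun i _ =>
          (norm_sum_le _ _).trans (Finset.sum_le_sum fun j _ => le_of_eq (norm_mul _ _)))
      have hA : (∑ i, ∑ j, ‖α t i j‖ ^ 2) ≤ traceNorm (u t) ^ 2 := by
        simp only [hα]
        exact (compress_le a c ha hc (u t)).trans (frobSq_le_traceNorm_sq (u t))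
      have hB : (∑ i, ∑ j, ‖β t i j‖ ^ 2) ≤ traceNorm (v t) ^ 2 := by
        simp only [hβ]
        exact (compress_le b e hb he (v t)).trans (frobSq_le_traceNorm_sq (v t))
      have hCS : (∑ i, ∑ j, ‖α t i j‖ * ‖β t i j‖) ^ 2 ≤
          (∑ i, ∑ j, ‖α t i j‖ ^ 2) * (∑ i, ∑ j, ‖β t i j‖ ^ 2) := by
        rw [← Fintype.sum_prod_type
            (f := fun z : Fin m₁ × Fin m₂ => ‖α t z.1 z.2‖ * ‖β t z.1 z.2‖),
          ← Fintype.sum_prod_type (f := fun z : Fin m₁ × Fin m₂ => ‖α t z.1 z.2‖ ^ 2),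
          ← Fintype.sum_prod_type (f := fun z : Fin m₁ × Fin m₂ => ‖β t z.1 z.2‖ ^ 2)]
        exact Finset.sum_mul_sq_le_sq_mul_sq Finset.univ _ _
      have h2 : (∑ i, ∑ j, ‖α t i j‖ * ‖β t i j‖) ^ 2 ≤
          (traceNorm (u t) * traceNorm (v t)) ^ 2 := by
        rw [mul_pow]
        exact hCS.trans (mul_le_mul hA hB (by positivity) (by positivity))
      have hS0 : (0:ℝ) ≤ ∑ i, ∑ j, ‖α t i j‖ * ‖β t i j‖ := by positivity
      refine hstep1.trans ?_
      calc ∑ i, ∑ j, ‖α t i j‖ * ‖β t i j‖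
          = Real.sqrt ((∑ i, ∑ j, ‖α t i j‖ * ‖β t i j‖) ^ 2) := (Real.sqrt_sq hS0).symm
        _ ≤ Real.sqrt ((traceNorm (u t) * traceNorm (v t)) ^ 2) := Real.sqrt_le_sqrt h2
        _ = traceNorm (u t) * traceNorm (v t) :=
            Real.sqrt_sq (mul_nonneg (traceNorm_nonneg _) (traceNorm_nonneg _))
    have : F = (∑ t, ∑ i, ∑ j, α t i j * β t i j).re := by rw [← hFC, Complex.ofReal_re]
    rw [this, hrval]
    calc (∑ t, ∑ i, ∑ j, α t i j * β t i j).re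
        ≤ ‖∑ t, ∑ i, ∑ j, α t i j * β t i j‖ := by
          exact Complex.re_le_norm _
      _ ≤ ∑ t, ‖∑ i, ∑ j, α t i j * β t i j‖ := norm_sum_le _ _
      _ ≤ ∑ t, traceNorm (u t) * traceNorm (v t) := Finset.sum_le_sum fun t _ => per t
  have hgcn : gcn T = sInf { r : ℝ | ∃ (n : ℕ) (u : Fin n → Matrix (Fin d₁) (Fin d₁) ℂ)
      (v : Fin n → Matrix (Fin d₂) (Fin d₂) ℂ),
      T = ∑ i, u i ⊗ₖ v i ∧ r = ∑ i, traceNorm (u i) * traceNorm (v i) } := rfl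
  have hmain : gcn T = F := by
    rw [hgcn]
    exact le_antisymm (csInf_le ⟨F, fun r hr => hlow r hr⟩ hmem) (le_csInf ⟨F, hmem⟩ hlow)
  refine ⟨hmain, hmain.trans ?_⟩
  rw [hFdef, Finset.sum_mul_sum]
  exact Finset.sum_congr rfl fun i _ => Finset.sum_congr rfl fun j _ => sqrtpq i j
end

section
/- Let d ≥ 2, f ∈ [−1,1], and let ρ_f be the Werner state on ℂ^d ⊗ ℂ^d. Define the twirl P_G(σ) := ∫ (U ⊗ U) σ (U ⊗ U)† dU, where the integral is over the unitary group U(d) with respect to its normalized Haar measure, and define β(ρ_f) := inf { Σᵢ λᵢ ‖Sᵢ‖_γ : λᵢ ≥ 0, each Sᵢ a rank-one matrix on ℂ^d ⊗ ℂ^d, ρ_f = Σᵢ λᵢ P_G(Sᵢ) (finite sum) }. Then β(ρ_f) = ‖ρ_f‖_γ. -/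
open scoped Matrix Kronecker BigOperators ComplexOrder
open MeasureTheory

/-- The twirl `P_G(σ) = ∫ (U ⊗ U) σ (U ⊗ U)† dU` over the unitary group, defined entrywise. -/
noncomputable def twirl {d : ℕ} [MeasurableSpace (Matrix.unitaryGroup (Fin d) ℂ)]
    (μ : Measure (Matrix.unitaryGroup (Fin d) ℂ))
    (σ : Matrix (Fin d × Fin d) (Fin d × Fin d) ℂ) :
    Matrix (Fin d × Fin d) (Fin d × Fin d) ℂ :=
  Matrix.of fun p q =>
    ∫ U : Matrix.unitaryGroup (Fin d) ℂ,
      (((U : Matrix (Fin d) (Fin d) ℂ) ⊗ₖ (U : Matrix (Fin d) (Fin d) ℂ)) * σ *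
        (((U : Matrix (Fin d) (Fin d) ℂ) ⊗ₖ (U : Matrix (Fin d) (Fin d) ℂ))ᴴ)) p q ∂μ

section PSDSqrt
open scoped MatrixOrder

variable {n : Type*} [Fintype n] [DecidableEq n]

/-- square root of a positive semidefinite matrix (via the CFC). -/
noncomputable def Matrix.PosSemidef.sqrt {M : Matrix n n ℂ} (_h : M.PosSemidef) : Matrix n n ℂ :=
  CFC.sqrt M

lemma Matrix.PosSemidef.posSemidef_sqrt {M : Matrix n n ℂ} (h : M.PosSemidef) :
    h.sqrt.PosSemidef :=
  Matrix.nonneg_iff_posSemidef.mp (CFC.sqrt_nonneg M)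

lemma Matrix.PosSemidef.sq_sqrt {M : Matrix n n ℂ} (h : M.PosSemidef) : h.sqrt ^ 2 = M :=
  CFC.sq_sqrt M h.nonneg

lemma Matrix.PosSemidef.sqrt_mul_self {M : Matrix n n ℂ} (h : M.PosSemidef) :
    h.sqrt * h.sqrt = M :=
  CFC.sqrt_mul_sqrt_self M h.nonneg

lemma Matrix.PosSemidef.eq_sqrt_of_sq_eq {A B : Matrix n n ℂ} (hB : B.PosSemidef)
    (hA : A.PosSemidef) (h : B ^ 2 = A) : B = hA.sqrt :=
  ((CFC.sqrt_eq_iff A B hA.nonneg hB.nonneg).mpr (by rw [← h, sq])).symm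

lemma traceNorm_eq_sqrt (A : Matrix n n ℂ) :
    traceNorm A = (Matrix.posSemidef_conjTranspose_mul_self A).sqrt.trace.re := by
  have h := Matrix.posSemidef_conjTranspose_mul_self A
  unfold traceNorm Matrix.PosSemidef.sqrt
  rw [CFC.sqrt_eq_cfc, cfc_nnreal_eq_real _ _ h.nonneg, h.1.cfc_eq]
  simp [Matrix.IsHermitian.cfc, Function.comp_def, max_eq_left, h.eigenvalues_nonneg]

end PSDSqrt

namespace BetaAux
open Matrix Finset

variable {n : Type*} [Fintype n] [DecidableEq n]

lemma traceNorm_eq_of {A B : Matrix n n ℂ} (hB : B.PosSemidef) (h : B ^ 2 = Aᴴ * A) :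
    traceNorm A = B.trace.re := by
  rw [traceNorm_eq_sqrt]
  rw [← hB.eq_sqrt_of_sq_eq (Matrix.posSemidef_conjTranspose_mul_self A) h]

lemma re_diag_nonneg {P : Matrix n n ℂ} (hP : P.PosSemidef) (i : n) : 0 ≤ (P i i).re := by
  exact (Complex.nonneg_iff.mp (hP.diag_nonneg (i := i))).1

lemma trace_re_nonneg {P : Matrix n n ℂ} (hP : P.PosSemidef) : 0 ≤ P.trace.re := by
  rw [Matrix.trace, Complex.re_sum]
  exact Finset.sum_nonneg fun i _ => re_diag_nonneg hP i

lemma traceNorm_nonneg (A : Matrix n n ℂ) : 0 ≤ traceNorm A := by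
  rw [traceNorm_eq_sqrt]; exact trace_re_nonneg (Matrix.posSemidef_conjTranspose_mul_self A).posSemidef_sqrt

lemma posSemidef_real_smul {P : Matrix n n ℂ} (hP : P.PosSemidef) {r : ℝ} (hr : 0 ≤ r) :
    ((r : ℂ) • P).PosSemidef := by
  exact hP.smul (Complex.zero_le_real.mpr hr)

lemma traceNorm_smul (c : ℂ) (A : Matrix n n ℂ) :
    traceNorm (c • A) = ‖c‖ * traceNorm A := by
  have h := Matrix.posSemidef_conjTranspose_mul_self A
  have hB : ((‖c‖ : ℂ) • h.sqrt).PosSemidef :=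
    posSemidef_real_smul h.posSemidef_sqrt (norm_nonneg c)
  have hsq : ((‖c‖ : ℂ) • h.sqrt) ^ 2 = (c • A)ᴴ * (c • A) := by
    rw [smul_pow, h.sq_sqrt, conjTranspose_smul, Matrix.smul_mul, Matrix.mul_smul, smul_smul]
    congr 1
    rw [Complex.star_def, ← Complex.normSq_eq_conj_mul_self, Complex.normSq_eq_norm_sq]
    norm_cast
  rw [traceNorm_eq_of hB hsq, Matrix.trace_smul, traceNorm_eq_sqrt]
  simp [Complex.re_ofReal_mul]

lemma traceNorm_unitary_conj {U : Matrix n n ℂ} (hU : U ∈ Matrix.unitaryGroup n ℂ)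
    (A : Matrix n n ℂ) : traceNorm (U * A * Uᴴ) = traceNorm A := by
  have h := Matrix.posSemidef_conjTranspose_mul_self A
  have hUU : Uᴴ * U = 1 := by
    rw [← Matrix.star_eq_conjTranspose]
    exact Matrix.mem_unitaryGroup_iff'.mp hU
  have hB : (U * h.sqrt * Uᴴ).PosSemidef := h.posSemidef_sqrt.mul_mul_conjTranspose_same U
  have hsq : (U * h.sqrt * Uᴴ) ^ 2 = (U * A * Uᴴ)ᴴ * (U * A * Uᴴ) := by
    have h1 : (U * h.sqrt * Uᴴ) ^ 2 = U * (h.sqrt * h.sqrt) * Uᴴ := by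
      rw [pow_two]
      calc U * h.sqrt * Uᴴ * (U * h.sqrt * Uᴴ)
          = U * h.sqrt * (Uᴴ * U) * h.sqrt * Uᴴ := by
            simp only [Matrix.mul_assoc]
        _ = U * (h.sqrt * h.sqrt) * Uᴴ := by rw [hUU]; simp only [Matrix.mul_one, Matrix.mul_assoc]
    rw [h1, h.sqrt_mul_self]
    calc U * (Aᴴ * A) * Uᴴ = Uᴴᴴ * Aᴴ * (Uᴴ * U) * A * Uᴴ := by
          rw [hUU, conjTranspose_conjTranspose]; simp only [Matrix.mul_one, Matrix.mul_assoc]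
      _ = (U * A * Uᴴ)ᴴ * (U * A * Uᴴ) := by
          simp only [conjTranspose_mul, conjTranspose_conjTranspose, Matrix.mul_assoc]
  rw [traceNorm_eq_of hB hsq, Matrix.trace_mul_cycle, ← Matrix.star_eq_conjTranspose U,
    Matrix.mem_unitaryGroup_iff'.mp hU, Matrix.one_mul, traceNorm_eq_sqrt]

lemma posSemidef_outer (y : n → ℂ) : (vecMulVec y (star y)).PosSemidef :=
  Matrix.posSemidef_vecMulVec_self_star y

lemma traceNorm_outer_unit {x y : n → ℂ} (hx : star x ⬝ᵥ x = 1) (hy : star y ⬝ᵥ y = 1) :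
    traceNorm (vecMulVec x (star y)) = 1 := by
  have hB := posSemidef_outer y
  have hsq : (vecMulVec y (star y)) ^ 2 =
      (vecMulVec x (star y))ᴴ * (vecMulVec x (star y)) := by
    ext i j
    rw [pow_two]
    simp only [Matrix.mul_apply, vecMulVec_apply, conjTranspose_apply, Pi.star_apply]
    have hL : ∑ t, y i * star (y t) * (y t * star (y j)) =
        (y i * star (y j)) * ∑ t, star (y t) * y t := by
      rw [Finset.mul_sum]; exact Finset.sum_congr rfl fun t _ => by ring
    have hR : ∑ t, star (x t * star (y i)) * (x t * star (y j)) =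
        (y i * star (y j)) * ∑ t, star (x t) * x t := by
      rw [Finset.mul_sum]
      refine Finset.sum_congr rfl fun t _ => ?_
      simp only [star_mul', star_star]
      ring
    rw [hL, hR]
    have h1 : ∑ t, star (y t) * y t = 1 := by simpa [dotProduct] using hy
    have h2 : ∑ t, star (x t) * x t = 1 := by simpa [dotProduct] using hx
    rw [h1, h2]
  rw [traceNorm_eq_of hB hsq, Matrix.trace]
  have : ∑ i, (vecMulVec y (star y)).diag i = star y ⬝ᵥ y := by
    simp [Matrix.diag, vecMulVec_apply, dotProduct, mul_comm]
  rw [this, hy]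
  simp

lemma dotProduct_unit_ne_zero {v : n → ℂ} (hv : star v ⬝ᵥ v = 1) : v ≠ 0 := by
  intro h0
  rw [h0] at hv
  simp [dotProduct] at hv

end BetaAux


namespace BetaAux
open Matrix Finset

variable {d₁ d₂ : ℕ}

def gSet (T : Matrix (Fin d₁ × Fin d₂) (Fin d₁ × Fin d₂) ℂ) : Set ℝ :=
  { r : ℝ | ∃ (n : ℕ) (u : Fin n → Matrix (Fin d₁) (Fin d₁) ℂ)
      (v : Fin n → Matrix (Fin d₂) (Fin d₂) ℂ),
      T = ∑ i, u i ⊗ₖ v i ∧ r = ∑ i, traceNorm (u i) * traceNorm (v i) }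

lemma gcn_eq_sInf (T : Matrix (Fin d₁ × Fin d₂) (Fin d₁ × Fin d₂) ℂ) :
    gcn T = sInf (gSet T) := rfl

lemma gSet_nonneg {T : Matrix (Fin d₁ × Fin d₂) (Fin d₁ × Fin d₂) ℂ} {r : ℝ}
    (hr : r ∈ gSet T) : 0 ≤ r := by
  obtain ⟨m, u, v, -, rfl⟩ := hr
  exact Finset.sum_nonneg fun i _ => mul_nonneg (traceNorm_nonneg _) (traceNorm_nonneg _)

lemma gSet_bddBelow (T : Matrix (Fin d₁ × Fin d₂) (Fin d₁ × Fin d₂) ℂ) :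
    BddBelow (gSet T) := ⟨0, fun _ hr => gSet_nonneg hr⟩

lemma stdBasis_eq_outer (i₁ : Fin d₁) (j₁ : Fin d₁) :
    Matrix.single i₁ j₁ (1 : ℂ) =
      vecMulVec (Pi.single i₁ 1) (star (Pi.single j₁ (1:ℂ))) := by
  ext a b
  simp [Matrix.single, vecMulVec_apply, Pi.single_apply, eq_comm]
  aesop

lemma traceNorm_stdBasis (i₁ : Fin d₁) (j₁ : Fin d₁) (c : ℂ) :
    traceNorm (Matrix.single i₁ j₁ c) = ‖c‖ := by
  have h1 : Matrix.single i₁ j₁ c = c • Matrix.single i₁ j₁ (1 : ℂ) := by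
    ext a b
    simp only [Matrix.single, Matrix.smul_apply, of_apply, smul_eq_mul, mul_ite, mul_one,
      mul_zero]
  have hu : star (Pi.single i₁ (1:ℂ)) ⬝ᵥ Pi.single i₁ (1:ℂ) = 1 := by
    simp [dotProduct, Pi.single_apply]
  have hv : star (Pi.single j₁ (1:ℂ)) ⬝ᵥ Pi.single j₁ (1:ℂ) = 1 := by
    simp [dotProduct, Pi.single_apply]
  rw [h1, traceNorm_smul, stdBasis_eq_outer, traceNorm_outer_unit hu hv, mul_one]

lemma matrix_eq_sum_kron (T : Matrix (Fin d₁ × Fin d₂) (Fin d₁ × Fin d₂) ℂ) :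
    T = ∑ x : (Fin d₁ × Fin d₂) × (Fin d₁ × Fin d₂),
      Matrix.single x.1.1 x.2.1 (T x.1 x.2) ⊗ₖ Matrix.single x.1.2 x.2.2 1 := by
  ext ⟨a, b⟩ ⟨c, e⟩
  rw [Matrix.sum_apply]
  rw [Finset.sum_eq_single ((a, b), (c, e))]
  · simp [kroneckerMap_apply, Matrix.single]
  · rintro ⟨⟨x11, x12⟩, ⟨x21, x22⟩⟩ - hx
    simp only [kroneckerMap_apply, Matrix.single, of_apply]
    split_ifs with h1 h2
    · exact absurd (by simp [Prod.ext_iff, h1.1, h1.2, h2.1, h2.2]) hx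
    · ring
    · ring
    · ring
  · intro h; exact absurd (Finset.mem_univ _) h

lemma gSet_nonempty (T : Matrix (Fin d₁ × Fin d₂) (Fin d₁ × Fin d₂) ℂ) :
    (gSet T).Nonempty := by
  classical
  set I := (Fin d₁ × Fin d₂) × (Fin d₁ × Fin d₂)
  set e : Fin (Fintype.card I) ≃ I := (Fintype.equivFin I).symm with he
  refine ⟨∑ i, traceNorm (Matrix.single (e i).1.1 (e i).2.1 (T (e i).1 (e i).2)) *
      traceNorm (Matrix.single (e i).1.2 (e i).2.2 (1:ℂ)), Fintype.card I,
    fun i => Matrix.single (e i).1.1 (e i).2.1 (T (e i).1 (e i).2),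
    fun i => Matrix.single (e i).1.2 (e i).2.2 1, ?_, rfl⟩
  rw [Fintype.sum_equiv e _
    (fun x => Matrix.single x.1.1 x.2.1 (T x.1 x.2) ⊗ₖ Matrix.single x.1.2 x.2.2 1)
    (fun i => rfl)]
  exact matrix_eq_sum_kron T

lemma gcn_le {T : Matrix (Fin d₁ × Fin d₂) (Fin d₁ × Fin d₂) ℂ} {r : ℝ}
    (hr : r ∈ gSet T) : gcn T ≤ r := csInf_le (gSet_bddBelow T) hr

lemma gcn_nonneg (T : Matrix (Fin d₁ × Fin d₂) (Fin d₁ × Fin d₂) ℂ) : 0 ≤ gcn T :=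
  le_csInf (gSet_nonempty T) fun _ hr => gSet_nonneg hr

lemma gcn_le_kron (u : Matrix (Fin d₁) (Fin d₁) ℂ) (v : Matrix (Fin d₂) (Fin d₂) ℂ) :
    gcn (u ⊗ₖ v) ≤ traceNorm u * traceNorm v := by
  refine gcn_le ⟨1, fun _ => u, fun _ => v, ?_, ?_⟩ <;> simp

lemma gcn_zero : gcn (0 : Matrix (Fin d₁ × Fin d₂) (Fin d₁ × Fin d₂) ℂ) = 0 := by
  refine le_antisymm (gcn_le ⟨0, fun _ => 0, fun _ => 0, by simp, by simp⟩) (gcn_nonneg 0)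

lemma gcn_add_le (A B : Matrix (Fin d₁ × Fin d₂) (Fin d₁ × Fin d₂) ℂ) :
    gcn (A + B) ≤ gcn A + gcn B := by
  refine le_of_forall_pos_le_add fun ε hε => ?_
  obtain ⟨r₁, hr₁, hlt₁⟩ := Real.lt_sInf_add_pos (gSet_nonempty A) (half_pos hε)
  obtain ⟨r₂, hr₂, hlt₂⟩ := Real.lt_sInf_add_pos (gSet_nonempty B) (half_pos hε)
  obtain ⟨n₁, u₁, v₁, hA, hc₁⟩ := hr₁
  obtain ⟨n₂, u₂, v₂, hB, hc₂⟩ := hr₂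
  have hmem : r₁ + r₂ ∈ gSet (A + B) := by
    refine ⟨n₁ + n₂, Fin.append u₁ u₂, Fin.append v₁ v₂, ?_, ?_⟩
    · rw [Fin.sum_univ_add]
      simp only [Fin.append_left, Fin.append_right]
      rw [← hA, ← hB]
    · rw [Fin.sum_univ_add]
      simp only [Fin.append_left, Fin.append_right]
      rw [hc₁, hc₂]
  have h3 := gcn_le hmem
  have hgA : gcn A = sInf (gSet A) := rfl
  have hgB : gcn B = sInf (gSet B) := rfl
  rw [← hgA] at hlt₁
  rw [← hgB] at hlt₂
  linarith

lemma gcn_smul_le (c : ℂ) (A : Matrix (Fin d₁ × Fin d₂) (Fin d₁ × Fin d₂) ℂ) :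
    gcn (c • A) ≤ ‖c‖ * gcn A := by
  refine le_of_forall_pos_le_add fun ε hε => ?_
  have hden : (0:ℝ) < ‖c‖ + 1 := by positivity
  obtain ⟨r, hr, hlt⟩ := Real.lt_sInf_add_pos (gSet_nonempty A) (div_pos hε hden)
  obtain ⟨m, u, v, hA, hc⟩ := hr
  have hmem : ‖c‖ * r ∈ gSet (c • A) := by
    refine ⟨m, fun i => c • u i, v, ?_, ?_⟩
    · rw [hA, Finset.smul_sum]
      exact Finset.sum_congr rfl fun i _ => (smul_kronecker c (u i) (v i)).symm
    · rw [hc, Finset.mul_sum]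
      exact Finset.sum_congr rfl fun i _ => by rw [traceNorm_smul]; ring
  have h3 := gcn_le hmem
  have hr0 : 0 ≤ r := gSet_nonneg ⟨m, u, v, hA, hc⟩
  have hgA : gcn A = sInf (gSet A) := rfl
  rw [← hgA] at hlt
  have habs : (0:ℝ) ≤ ‖c‖ := norm_nonneg c
  calc gcn (c • A) ≤ ‖c‖ * r := h3
    _ ≤ ‖c‖ * (gcn A + ε / (‖c‖ + 1)) := by
        exact mul_le_mul_of_nonneg_left (le_of_lt hlt) habs
    _ = ‖c‖ * gcn A + ‖c‖ * (ε / (‖c‖ + 1)) := by ring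
    _ ≤ ‖c‖ * gcn A + ε := by
        have h4 : ‖c‖ / (‖c‖ + 1) ≤ 1 := by
          rw [div_le_one hden]; linarith
        have h5 : ‖c‖ * (ε / (‖c‖ + 1)) =
            ε * (‖c‖ / (‖c‖ + 1)) := by ring
        nlinarith
  
end BetaAux

namespace BetaAux
open Matrix Finset

variable {d₁ d₂ : ℕ}

lemma gcn_sum_le {m : ℕ} (g : Fin m → Matrix (Fin d₁ × Fin d₂) (Fin d₁ × Fin d₂) ℂ) :
    gcn (∑ i, g i) ≤ ∑ i, gcn (g i) :=
  Finset.le_sum_of_subadditive gcn gcn_zero.le gcn_add_le Finset.univ g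

lemma kron_conjTranspose (A : Matrix (Fin d₁) (Fin d₁) ℂ) (B : Matrix (Fin d₂) (Fin d₂) ℂ) :
    (A ⊗ₖ B)ᴴ = Aᴴ ⊗ₖ Bᴴ := by
  ext p q
  simp [conjTranspose_apply, kroneckerMap_apply, star_mul', mul_comm]

/-- transport of a `gSet` decomposition through conjugation by `U ⊗ₖ U`. -/
lemma gcn_conj_le {d : ℕ} {U : Matrix (Fin d) (Fin d) ℂ} (hU : U ∈ Matrix.unitaryGroup (Fin d) ℂ)
    {T : Matrix (Fin d × Fin d) (Fin d × Fin d) ℂ} {r : ℝ} (hr : r ∈ gSet T) :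
    gcn ((U ⊗ₖ U) * T * (U ⊗ₖ U)ᴴ) ≤ r := by
  obtain ⟨m, u, v, hT, hc⟩ := hr
  refine gcn_le ⟨m, fun i => U * u i * Uᴴ, fun i => U * v i * Uᴴ, ?_, ?_⟩
  · rw [hT, Finset.mul_sum, Finset.sum_mul]
    refine Finset.sum_congr rfl fun i _ => ?_
    rw [kron_conjTranspose, ← mul_kronecker_mul, ← mul_kronecker_mul]
  · rw [hc]
    exact Finset.sum_congr rfl fun i _ => by
      rw [traceNorm_unitary_conj hU, traceNorm_unitary_conj hU]

/-- real-scalar version of `gcn_smul_le` -/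
lemma gcn_real_smul_le (a : ℝ) (A : Matrix (Fin d₁ × Fin d₂) (Fin d₁ × Fin d₂) ℂ) :
    gcn (a • A) ≤ |a| * gcn A := by
  have h1 : a • A = (a : ℂ) • A := by
    ext p q; simp [Matrix.smul_apply, Complex.real_smul]
  rw [h1]
  simpa [Complex.norm_real, Real.norm_eq_abs] using gcn_smul_le (a : ℂ) A

lemma gcn_sub_triangle (A B : Matrix (Fin d₁ × Fin d₂) (Fin d₁ × Fin d₂) ℂ) :
    gcn A ≤ gcn B + gcn (A - B) := by
  have : A = B + (A - B) := by abel
  calc gcn A = gcn (B + (A - B)) := by rw [← this]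
    _ ≤ gcn B + gcn (A - B) := gcn_add_le _ _

lemma gcn_neg (A : Matrix (Fin d₁ × Fin d₂) (Fin d₁ × Fin d₂) ℂ) : gcn (-A) ≤ gcn A := by
  have h1 : -A = (-1 : ℝ) • A := by ext p q; simp
  rw [h1]
  simpa using gcn_real_smul_le (-1) A

lemma gcn_le_sum_abs (A : Matrix (Fin d₁ × Fin d₂) (Fin d₁ × Fin d₂) ℂ) :
    gcn A ≤ ∑ x : (Fin d₁ × Fin d₂) × (Fin d₁ × Fin d₂), ‖A x.1 x.2‖ := by
  classical
  set I := (Fin d₁ × Fin d₂) × (Fin d₁ × Fin d₂)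
  set e : Fin (Fintype.card I) ≃ I := (Fintype.equivFin I).symm with he
  have hmem : (∑ i, traceNorm (Matrix.single (e i).1.1 (e i).2.1 (A (e i).1 (e i).2)) *
      traceNorm (Matrix.single (e i).1.2 (e i).2.2 (1:ℂ))) ∈ gSet A := by
    refine ⟨Fintype.card I, _, _, ?_, rfl⟩
    rw [Fintype.sum_equiv e _
      (fun x => Matrix.single x.1.1 x.2.1 (A x.1 x.2) ⊗ₖ Matrix.single x.1.2 x.2.2 1)
      (fun i => rfl)]
    exact matrix_eq_sum_kron A
  refine (gcn_le hmem).trans ?_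
  rw [Fintype.sum_equiv e _
    (fun x => traceNorm (Matrix.single x.1.1 x.2.1 (A x.1 x.2)) *
      traceNorm (Matrix.single x.1.2 x.2.2 (1:ℂ))) (fun i => rfl)]
  refine le_of_eq (Finset.sum_congr rfl fun x _ => ?_)
  rw [traceNorm_stdBasis, traceNorm_stdBasis]
  simp

end BetaAux

namespace BetaAux
open Matrix Finset

variable {n : Type*} [Fintype n] [DecidableEq n]

lemma rank_vecMulVec_one {w z : n → ℂ} (hw : w ≠ 0) (hz : z ≠ 0) :
    (vecMulVec w z).rank = 1 := by
  have hle : (vecMulVec w z).rank ≤ 1 := by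
    rw [vecMulVec_eq (Fin 1)]
    exact (Matrix.rank_mul_le_left _ _).trans
      ((Matrix.rank_le_card_width _).trans (by simp))
  have hne : (vecMulVec w z).rank ≠ 0 := by
    intro h0
    obtain ⟨j, hj⟩ := Function.ne_iff.mp hz
    obtain ⟨i, hi⟩ := Function.ne_iff.mp hw
    have hbot : LinearMap.range (vecMulVec w z).mulVecLin = ⊥ :=
      Submodule.finrank_eq_zero.mp h0
    have hmem : (vecMulVec w z) *ᵥ Pi.single j 1 ∈ LinearMap.range (vecMulVec w z).mulVecLin :=
      ⟨Pi.single j 1, rfl⟩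
    rw [hbot, Submodule.mem_bot] at hmem
    have h2 := congrFun hmem i
    rw [Matrix.mulVec_single] at h2
    simp only [vecMulVec_apply, mul_one, Pi.zero_apply] at h2
    exact (mul_ne_zero (by simpa using hi) (by simpa using hj)) (by simpa [vecMulVec_apply] using h2)
  omega

lemma svd_exists [Nonempty n] (A : Matrix n n ℂ) :
    ∃ (σ : n → ℝ) (x y : n → n → ℂ),
      (∀ k, 0 ≤ σ k) ∧ (∀ k, star (x k) ⬝ᵥ x k = 1) ∧ (∀ k, star (y k) ⬝ᵥ y k = 1) ∧
      A = ∑ k, (σ k : ℂ) • vecMulVec (x k) (star (y k)) ∧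
      traceNorm A = ∑ k, σ k := by
  classical
  have h : (Aᴴ * A).PosSemidef := Matrix.posSemidef_conjTranspose_mul_self A
  set y : n → n → ℂ := fun k => ⇑(h.1.eigenvectorBasis k) with hy
  set σ : n → ℝ := fun k => Real.sqrt (h.1.eigenvalues k) with hσ
  have hσ0 : ∀ k, 0 ≤ σ k := fun k => Real.sqrt_nonneg _
  have heigsq : ∀ k, h.1.eigenvalues k = σ k ^ 2 := fun k =>
    (Real.sq_sqrt (h.eigenvalues_nonneg k)).symm
  -- columns are unit vectors
  have hyunit : ∀ k, star (y k) ⬝ᵥ y k = 1 := by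
    intro k
    have h1 : ((star (h.1.eigenvectorUnitary : Matrix n n ℂ)) *
        (h.1.eigenvectorUnitary : Matrix n n ℂ)) k k = 1 := by
      rw [Unitary.coe_star_mul_self]
      simp
    rw [Matrix.mul_apply] at h1
    simpa [dotProduct, conjTranspose_apply, Matrix.star_eq_conjTranspose, hy,
      Matrix.IsHermitian.eigenvectorUnitary_apply] using h1
  -- eigenvector equation
  have heig : ∀ k, (Aᴴ * A) *ᵥ y k = (h.1.eigenvalues k : ℂ) • y k := by
    intro k
    ext i
    have h2 := congrFun (h.1.mulVec_eigenvectorBasis k) i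
    simpa only [Pi.smul_apply, Complex.real_smul, smul_eq_mul] using h2
  -- norm of A y k
  have hAy : ∀ k, star (A *ᵥ y k) ⬝ᵥ (A *ᵥ y k) = ((h.1.eigenvalues k : ℝ) : ℂ) := by
    intro k
    rw [Matrix.star_mulVec, dotProduct_mulVec, Matrix.vecMul_vecMul,
      ← dotProduct_mulVec, heig k, dotProduct_smul, smul_eq_mul, hyunit k, mul_one]
  set x : n → n → ℂ := fun k =>
    if σ k = 0 then (fun i => if i = Classical.arbitrary n then 1 else 0)
    else ((σ k : ℂ)⁻¹) • (A *ᵥ y k) with hx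
  have hxunit : ∀ k, star (x k) ⬝ᵥ x k = 1 := by
    intro k
    by_cases h0 : σ k = 0
    · simp only [hx, h0, if_true]
      simp [dotProduct, apply_ite, Finset.sum_ite_eq']
    · simp only [hx, h0, if_false]
      rw [star_smul, smul_dotProduct, dotProduct_smul, hAy k, smul_eq_mul,
        smul_eq_mul]
      rw [star_inv₀]
      simp only [Complex.star_def, Complex.conj_ofReal]
      rw [heigsq k]
      have hc : (σ k : ℂ) ≠ 0 := by exact_mod_cast h0
      push_cast
      field_simp
  have hterm : ∀ k, (σ k : ℂ) • vecMulVec (x k) (star (y k)) =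
      vecMulVec (A *ᵥ y k) (star (y k)) := by
    intro k
    by_cases h0 : σ k = 0
    · have heval : h.1.eigenvalues k = 0 := by rw [heigsq k, h0]; ring
      have hAy0 : A *ᵥ y k = 0 := by
        rw [← dotProduct_star_self_eq_zero (v := A *ᵥ y k), hAy k, heval]
        norm_num
      rw [h0, hAy0]
      ext i j
      simp [vecMulVec_apply]
    · simp only [hx, h0, if_false]
      ext i j
      have hc : (σ k : ℂ) ≠ 0 := by exact_mod_cast h0
      simp only [vecMulVec_apply, Matrix.smul_apply, Pi.smul_apply, smul_eq_mul]
      field_simp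
  have hsum : ∑ k, vecMulVec (A *ᵥ y k) (star (y k)) = A := by
    have h1 : ∀ k, vecMulVec (A *ᵥ y k) (star (y k)) = A * vecMulVec (y k) (star (y k)) := by
      intro k
      ext i j
      simp only [vecMulVec_apply, Matrix.mul_apply, Matrix.mulVec, dotProduct,
        Finset.sum_mul]
      exact Finset.sum_congr rfl fun t _ => by ring
    simp only [h1]
    rw [← Finset.mul_sum]
    have h2 : ∑ k, vecMulVec (y k) (star (y k)) =
        (h.1.eigenvectorUnitary : Matrix n n ℂ) * star (h.1.eigenvectorUnitary : Matrix n n ℂ) := by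
      ext i j
      rw [Matrix.mul_apply, Matrix.sum_apply]
      refine Finset.sum_congr rfl fun k _ => ?_
      simp [vecMulVec_apply, Matrix.star_eq_conjTranspose, conjTranspose_apply, hy,
        Matrix.IsHermitian.eigenvectorUnitary_apply]
    rw [h2, ← Unitary.coe_star, Unitary.coe_mul_star_self, Matrix.mul_one]
  have htrace : traceNorm A = ∑ k, σ k := by
    unfold traceNorm
    rw [Matrix.trace_mul_cycle, Unitary.coe_star_mul_self, Matrix.one_mul, Matrix.trace_diagonal,
      Complex.re_sum]
    exact Finset.sum_congr rfl fun k _ => by simp [hσ]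
  refine ⟨σ, x, y, hσ0, hxunit, hyunit, ?_, htrace⟩
  calc A = ∑ k, vecMulVec (A *ᵥ y k) (star (y k)) := hsum.symm
    _ = ∑ k, (σ k : ℂ) • vecMulVec (x k) (star (y k)) :=
        Finset.sum_congr rfl fun k _ => (hterm k).symm

end BetaAux




namespace BetaAux
open Matrix Finset

attribute [local instance] Matrix.normedAddCommGroup Matrix.normedSpace Matrix.isBoundedSMul

noncomputable instance matCENorm {m n : Type*} [Fintype m] [Fintype n] :
    ContinuousENorm (Matrix m n ℂ) := by
  exact SeminormedAddGroup.toContinuousENorm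

lemma isCompact_unitaryGroup (d : ℕ) :
    IsCompact (Matrix.unitaryGroup (Fin d) ℂ : Set (Matrix (Fin d) (Fin d) ℂ)) := by
  have h1 : IsCompact ((Set.univ.pi fun _ : Fin d => Set.univ.pi fun _ : Fin d =>
      Metric.closedBall (0 : ℂ) 1) : Set (Matrix (Fin d) (Fin d) ℂ)) :=
    isCompact_univ_pi fun _ => isCompact_univ_pi fun _ => isCompact_closedBall 0 1
  refine IsCompact.of_isClosed_subset h1 ?_ ?_
  · have h2 : (Matrix.unitaryGroup (Fin d) ℂ : Set (Matrix (Fin d) (Fin d) ℂ)) =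
        {M : Matrix (Fin d) (Fin d) ℂ | M * star M = 1} :=
      Set.ext fun M => Matrix.mem_unitaryGroup_iff
    rw [h2]
    exact isClosed_eq (continuous_id.matrix_mul continuous_id.star) continuous_const
  · intro M hM
    have hM' : M ∈ Matrix.unitaryGroup (Fin d) ℂ := hM
    intro i _
    intro j _
    rw [mem_closedBall_zero_iff]
    exact entry_norm_bound_of_unitary hM' i j

lemma compactSpace_unitaryGroup (d : ℕ) : CompactSpace (Matrix.unitaryGroup (Fin d) ℂ) :=
  isCompact_iff_compactSpace.mp (isCompact_unitaryGroup d)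

variable {d : ℕ} [MeasurableSpace (Matrix.unitaryGroup (Fin d) ℂ)]

/-- The conjugation integrand of the twirl. -/
noncomputable def gfun (σ : Matrix (Fin d × Fin d) (Fin d × Fin d) ℂ)
    (U : Matrix.unitaryGroup (Fin d) ℂ) : Matrix (Fin d × Fin d) (Fin d × Fin d) ℂ :=
  (((U : Matrix (Fin d) (Fin d) ℂ) ⊗ₖ (U : Matrix (Fin d) (Fin d) ℂ)) * σ *
    (((U : Matrix (Fin d) (Fin d) ℂ) ⊗ₖ (U : Matrix (Fin d) (Fin d) ℂ))ᴴ))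

lemma continuous_gfun (σ : Matrix (Fin d × Fin d) (Fin d × Fin d) ℂ) :
    Continuous (gfun (d := d) σ) := by
  have hcoe : Continuous fun U : Matrix.unitaryGroup (Fin d) ℂ =>
      (U : Matrix (Fin d) (Fin d) ℂ) := continuous_subtype_val
  have hent : ∀ i j : Fin d, Continuous fun U : Matrix.unitaryGroup (Fin d) ℂ =>
      (U : Matrix (Fin d) (Fin d) ℂ) i j := fun i j =>
    (continuous_apply j).comp ((continuous_apply i).comp hcoe)
  have hkron : Continuous fun U : Matrix.unitaryGroup (Fin d) ℂ =>
      ((U : Matrix (Fin d) (Fin d) ℂ) ⊗ₖ (U : Matrix (Fin d) (Fin d) ℂ)) := by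
    refine continuous_matrix fun p q => ?_
    simp only [kroneckerMap_apply]
    exact (hent p.1 q.1).mul (hent p.2 q.2)
  exact (hkron.matrix_mul continuous_const).matrix_mul hkron.matrix_conjTranspose

variable [BorelSpace (Matrix.unitaryGroup (Fin d) ℂ)] [CompactSpace (Matrix.unitaryGroup (Fin d) ℂ)]
variable (μ : Measure (Matrix.unitaryGroup (Fin d) ℂ)) [IsProbabilityMeasure μ]

lemma integrable_gfun (σ : Matrix (Fin d × Fin d) (Fin d × Fin d) ℂ) :
    Integrable (gfun (d := d) σ) μ :=
  (continuous_gfun σ).integrable_of_hasCompactSupport (HasCompactSupport.of_compactSpace _)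

lemma twirl_eq_integral (σ : Matrix (Fin d × Fin d) (Fin d × Fin d) ℂ) :
    twirl μ σ = ∫ U, gfun (d := d) σ U ∂μ := by
  ext p q
  have hL : Continuous fun M : Matrix (Fin d × Fin d) (Fin d × Fin d) ℂ => M p q :=
    (continuous_apply q).comp (continuous_apply p)
  let L : Matrix (Fin d × Fin d) (Fin d × Fin d) ℂ →L[ℝ] ℂ :=
    { toFun := fun M => M p q
      map_add' := fun _ _ => rfl
      map_smul' := fun _ _ => rfl
      cont := hL }
  have h1 := L.integral_comp_comm (integrable_gfun μ σ)
  exact h1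

lemma twirl_sum {m : ℕ} (c : Fin m → ℂ)
    (S : Fin m → Matrix (Fin d × Fin d) (Fin d × Fin d) ℂ) :
    twirl μ (∑ i, c i • S i) = ∑ i, c i • twirl μ (S i) := by
  have hg : ∀ U, gfun (d := d) (∑ i, c i • S i) U = ∑ i, c i • gfun (d := d) (S i) U := by
    intro U
    simp only [gfun, Finset.mul_sum, Finset.sum_mul, Matrix.mul_smul, Matrix.smul_mul]
  rw [twirl_eq_integral]
  simp_rw [hg]
  have h2 : ∫ U, ∑ i, c i • gfun (d := d) (S i) U ∂μ
      = ∑ i, ∫ U, c i • gfun (d := d) (S i) U ∂μ :=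
    integral_finset_sum _ fun i _ => (integrable_gfun μ (S i)).smul (c i)
  rw [h2]
  refine Finset.sum_congr rfl fun i _ => ?_
  rw [integral_smul, ← twirl_eq_integral]

end BetaAux

namespace BetaAux
open Matrix Finset

attribute [local instance] Matrix.normedAddCommGroup Matrix.normedSpace Matrix.isBoundedSMul

lemma flip_comm {d : ℕ} (U : Matrix (Fin d) (Fin d) ℂ) :
    (U ⊗ₖ U) * flipOp d = flipOp d * (U ⊗ₖ U) := by
  ext ⟨a, b⟩ ⟨c, e⟩
  rw [Matrix.mul_apply, Matrix.mul_apply]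
  rw [Finset.sum_eq_single ((e, c) : Fin d × Fin d)]
  rotate_left
  · rintro ⟨r₁, r₂⟩ - hx
    simp only [flipOp, Matrix.of_apply]
    split_ifs with h
    · exact absurd (by simp [Prod.ext_iff, h.1, h.2]) hx
    · ring
  · intro h; exact absurd (Finset.mem_univ _) h
  rw [Finset.sum_eq_single ((b, a) : Fin d × Fin d)]
  rotate_left
  · rintro ⟨r₁, r₂⟩ - hx
    simp only [flipOp, Matrix.of_apply]
    split_ifs with h
    · exact absurd (by simp [Prod.ext_iff, h.1, h.2]) hx
    · ring
  · intro h; exact absurd (Finset.mem_univ _) h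
  simp only [flipOp, Matrix.of_apply, kroneckerMap_apply, if_pos]
  simp only [and_self, if_true]
  ring_nf

lemma werner_conj (d : ℕ) (f : ℝ) {U : Matrix (Fin d) (Fin d) ℂ}
    (hU : U ∈ Matrix.unitaryGroup (Fin d) ℂ) :
    (U ⊗ₖ U) * wernerState d f * (U ⊗ₖ U)ᴴ = wernerState d f := by
  have hcomm : (U ⊗ₖ U) * wernerState d f = wernerState d f * (U ⊗ₖ U) := by
    unfold wernerState
    rw [Matrix.mul_smul, Matrix.smul_mul, Matrix.mul_add, Matrix.add_mul,
      Matrix.mul_smul, Matrix.smul_mul, Matrix.mul_smul, Matrix.smul_mul,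
      Matrix.mul_one, Matrix.one_mul, flip_comm]
  rw [hcomm, Matrix.mul_assoc, kron_conjTranspose, ← mul_kronecker_mul,
    ← Matrix.star_eq_conjTranspose, Matrix.mem_unitaryGroup_iff.mp hU, one_kronecker_one,
    Matrix.mul_one]

variable {d : ℕ} [MeasurableSpace (Matrix.unitaryGroup (Fin d) ℂ)]
variable (μ : Measure (Matrix.unitaryGroup (Fin d) ℂ)) [IsProbabilityMeasure μ]

lemma twirl_werner (f : ℝ) : twirl μ (wernerState d f) = wernerState d f := by
  ext p q
  show (∫ U : Matrix.unitaryGroup (Fin d) ℂ,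
      (((U : Matrix (Fin d) (Fin d) ℂ) ⊗ₖ (U : Matrix (Fin d) (Fin d) ℂ)) * wernerState d f *
        (((U : Matrix (Fin d) (Fin d) ℂ) ⊗ₖ (U : Matrix (Fin d) (Fin d) ℂ))ᴴ)) p q ∂μ)
    = wernerState d f p q
  have h1 : ∀ U : Matrix.unitaryGroup (Fin d) ℂ,
      (((U : Matrix (Fin d) (Fin d) ℂ) ⊗ₖ (U : Matrix (Fin d) (Fin d) ℂ)) * wernerState d f *
        (((U : Matrix (Fin d) (Fin d) ℂ) ⊗ₖ (U : Matrix (Fin d) (Fin d) ℂ))ᴴ)) p q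
      = wernerState d f p q := fun U => by rw [werner_conj d f U.2]
  simp_rw [h1]
  simp

section sublevel

variable {d₁ d₂ : ℕ}

lemma gcn_lipschitz (A B : Matrix (Fin d₁ × Fin d₂) (Fin d₁ × Fin d₂) ℂ) :
    |gcn A - gcn B| ≤ (Fintype.card ((Fin d₁ × Fin d₂) × (Fin d₁ × Fin d₂)) : ℝ) * ‖A - B‖ := by
  have hbound : ∀ C : Matrix (Fin d₁ × Fin d₂) (Fin d₁ × Fin d₂) ℂ,
      gcn C ≤ (Fintype.card ((Fin d₁ × Fin d₂) × (Fin d₁ × Fin d₂)) : ℝ) * ‖C‖ := by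
    intro C
    refine (gcn_le_sum_abs C).trans ?_
    calc ∑ x : (Fin d₁ × Fin d₂) × (Fin d₁ × Fin d₂), ‖C x.1 x.2‖
        ≤ ∑ _x : (Fin d₁ × Fin d₂) × (Fin d₁ × Fin d₂), ‖C‖ := by
          refine Finset.sum_le_sum fun x _ => ?_
          exact norm_entry_le_entrywise_sup_norm C
      _ = (Fintype.card ((Fin d₁ × Fin d₂) × (Fin d₁ × Fin d₂)) : ℝ) * ‖C‖ := by
          rw [Finset.sum_const, Finset.card_univ, nsmul_eq_mul]
  rw [abs_sub_le_iff]
  constructor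
  · have h1 := gcn_sub_triangle A B
    have h2 := hbound (A - B)
    linarith
  · have h1 := gcn_sub_triangle B A
    have h2 : gcn (B - A) ≤ gcn (A - B) := by
      have : B - A = -(A - B) := by abel
      rw [this]
      exact gcn_neg _
    have h3 := hbound (A - B)
    linarith

lemma continuous_gcn :
    Continuous (gcn : Matrix (Fin d₁ × Fin d₂) (Fin d₁ × Fin d₂) ℂ → ℝ) := by
  refine (LipschitzWith.of_dist_le_mul
    (K := (Fintype.card ((Fin d₁ × Fin d₂) × (Fin d₁ × Fin d₂)) : NNReal)) ?_).continuous
  intro A B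
  rw [Real.dist_eq, dist_eq_norm]
  simpa using gcn_lipschitz A B

lemma gcn_sublevel_closed (r : ℝ) :
    IsClosed {A : Matrix (Fin d₁ × Fin d₂) (Fin d₁ × Fin d₂) ℂ | gcn A ≤ r} :=
  IsClosed.preimage continuous_gcn isClosed_Iic

lemma gcn_sublevel_convex (r : ℝ) :
    Convex ℝ {A : Matrix (Fin d₁ × Fin d₂) (Fin d₁ × Fin d₂) ℂ | gcn A ≤ r} := by
  intro A hA B hB a b ha hb hab
  simp only [Set.mem_setOf_eq] at hA hB ⊢
  calc gcn (a • A + b • B) ≤ gcn (a • A) + gcn (b • B) := gcn_add_le _ _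
    _ ≤ |a| * gcn A + |b| * gcn B := add_le_add (gcn_real_smul_le a A) (gcn_real_smul_le b B)
    _ = a * gcn A + b * gcn B := by rw [abs_of_nonneg ha, abs_of_nonneg hb]
    _ ≤ a * r + b * r :=
        add_le_add (mul_le_mul_of_nonneg_left hA ha) (mul_le_mul_of_nonneg_left hB hb)
    _ = r := by rw [← add_mul, hab, one_mul]

end sublevel

variable [BorelSpace (Matrix.unitaryGroup (Fin d) ℂ)]
variable [CompactSpace (Matrix.unitaryGroup (Fin d) ℂ)]

lemma gcn_twirl_le (σ : Matrix (Fin d × Fin d) (Fin d × Fin d) ℂ) :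
    gcn (twirl μ σ) ≤ gcn σ := by
  conv_rhs => rw [gcn_eq_sInf σ]
  refine le_csInf (gSet_nonempty σ) fun r hr => ?_
  have hmem : ∀ U : Matrix.unitaryGroup (Fin d) ℂ,
      gfun (d := d) σ U ∈ {A : Matrix (Fin d × Fin d) (Fin d × Fin d) ℂ | gcn A ≤ r} :=
    fun U => gcn_conj_le U.2 hr
  have h2 := (gcn_sublevel_convex r).integral_mem (gcn_sublevel_closed r)
    (Filter.Eventually.of_forall hmem) (integrable_gfun μ σ)
  rw [twirl_eq_integral μ σ]
  exact h2

end BetaAux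

namespace BetaAux
open Matrix Finset

lemma vecMulVec_kron {d : ℕ} (x y a b : Fin d → ℂ) :
    vecMulVec x (star y) ⊗ₖ vecMulVec a (star b) =
      vecMulVec (fun p : Fin d × Fin d => x p.1 * a p.2)
        (star fun q : Fin d × Fin d => y q.1 * b q.2) := by
  ext ⟨p1, p2⟩ ⟨q1, q2⟩
  simp only [kroneckerMap_apply, vecMulVec_apply, Pi.star_apply, star_mul']
  ring

lemma dot_kron_unit {d : ℕ} {w z : Fin d → ℂ} (hw : star w ⬝ᵥ w = 1) (hz : star z ⬝ᵥ z = 1) :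
    star (fun p : Fin d × Fin d => w p.1 * z p.2) ⬝ᵥ (fun p : Fin d × Fin d => w p.1 * z p.2)
      = 1 := by
  have hw' : ∑ i, star (w i) * w i = 1 := by simpa [dotProduct] using hw
  have hz' : ∑ i, star (z i) * z i = 1 := by simpa [dotProduct] using hz
  calc star (fun p : Fin d × Fin d => w p.1 * z p.2) ⬝ᵥ (fun p : Fin d × Fin d => w p.1 * z p.2)
      = ∑ i, ∑ j, (star (w i) * w i) * (star (z j) * z j) := by
        rw [dotProduct, Fintype.sum_prod_type]
        exact Finset.sum_congr rfl fun i _ => Finset.sum_congr rfl fun j _ => by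
          simp only [Pi.star_apply, star_mul']; ring
    _ = (∑ i, star (w i) * w i) * (∑ j, star (z j) * z j) := (Finset.sum_mul_sum _ _ _ _).symm
    _ = 1 := by rw [hw', hz', mul_one]

lemma rank_kron_outer {d : ℕ} {x y a b : Fin d → ℂ} (hx : star x ⬝ᵥ x = 1)
    (hy : star y ⬝ᵥ y = 1) (ha : star a ⬝ᵥ a = 1) (hb : star b ⬝ᵥ b = 1) :
    (vecMulVec x (star y) ⊗ₖ vecMulVec a (star b)).rank = 1 := by
  rw [vecMulVec_kron]
  apply rank_vecMulVec_one
  · exact dotProduct_unit_ne_zero (dot_kron_unit hx ha)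
  · intro h0
    have h1 : (fun q : Fin d × Fin d => y q.1 * b q.2) = 0 := by
      funext q
      have h2 := congrFun h0 q
      simpa [Pi.star_apply, star_eq_zero] using h2
    exact dotProduct_unit_ne_zero (dot_kron_unit hy hb) h1

lemma exists_beta_decomp {d : ℕ} (hd : 0 < d)
    [MeasurableSpace (Matrix.unitaryGroup (Fin d) ℂ)]
    [BorelSpace (Matrix.unitaryGroup (Fin d) ℂ)]
    [CompactSpace (Matrix.unitaryGroup (Fin d) ℂ)]
    (μ : Measure (Matrix.unitaryGroup (Fin d) ℂ)) [IsProbabilityMeasure μ]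
    {ρ : Matrix (Fin d × Fin d) (Fin d × Fin d) ℂ} (hinv : twirl μ ρ = ρ)
    {r : ℝ} (hr : r ∈ gSet ρ) :
    ∃ (m : ℕ) (lam : Fin m → ℝ) (S : Fin m → Matrix (Fin d × Fin d) (Fin d × Fin d) ℂ),
      (∀ i, 0 ≤ lam i) ∧ (∀ i, (S i).rank = 1) ∧
      ρ = ∑ i, ((lam i : ℝ) : ℂ) • twirl μ (S i) ∧
      ∑ i, lam i * gcn (S i) ≤ r := by
  classical
  haveI : Nonempty (Fin d) := ⟨⟨0, hd⟩⟩
  obtain ⟨m₀, u, v, hdec, hcost⟩ := hr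
  choose σ x y hσ0 hx hy hAeq htru using fun i => svd_exists (u i)
  choose τ a b hτ0 ha hb hBeq htrv using fun i => svd_exists (v i)
  set ι := Fin m₀ × (Fin d × Fin d) with hι
  set e : Fin (Fintype.card ι) ≃ ι := (Fintype.equivFin ι).symm with he
  refine ⟨Fintype.card ι,
    fun j => σ (e j).1 (e j).2.1 * τ (e j).1 (e j).2.2,
    fun j => vecMulVec (x (e j).1 (e j).2.1) (star (y (e j).1 (e j).2.1)) ⊗ₖ
      vecMulVec (a (e j).1 (e j).2.2) (star (b (e j).1 (e j).2.2)), ?_, ?_, ?_, ?_⟩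
  · exact fun j => mul_nonneg (hσ0 _ _) (hτ0 _ _)
  · exact fun j => rank_kron_outer (hx _ _) (hy _ _) (ha _ _) (hb _ _)
  · -- decomposition of ρ
    have key : ∀ i, u i ⊗ₖ v i = ∑ k, ∑ l, ((σ i k * τ i l : ℝ) : ℂ) •
        (vecMulVec (x i k) (star (y i k)) ⊗ₖ vecMulVec (a i l) (star (b i l))) := by
      intro i
      conv_lhs => rw [hAeq i, hBeq i]
      ext ⟨p1, p2⟩ ⟨q1, q2⟩
      simp only [kroneckerMap_apply, Matrix.sum_apply, Matrix.smul_apply, vecMulVec_apply,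
        smul_eq_mul]
      rw [Finset.sum_mul_sum]
      refine Finset.sum_congr rfl fun k _ => Finset.sum_congr rfl fun l _ => ?_
      push_cast
      ring
    have hsum0 : (∑ j, ((σ (e j).1 (e j).2.1 * τ (e j).1 (e j).2.2 : ℝ) : ℂ) •
        (vecMulVec (x (e j).1 (e j).2.1) (star (y (e j).1 (e j).2.1)) ⊗ₖ
          vecMulVec (a (e j).1 (e j).2.2) (star (b (e j).1 (e j).2.2)))) = ρ := by
      rw [Fintype.sum_equiv e _
        (fun t => ((σ t.1 t.2.1 * τ t.1 t.2.2 : ℝ) : ℂ) •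
          (vecMulVec (x t.1 t.2.1) (star (y t.1 t.2.1)) ⊗ₖ
            vecMulVec (a t.1 t.2.2) (star (b t.1 t.2.2)))) (fun j => rfl)]
      rw [Fintype.sum_prod_type, hdec]
      refine Finset.sum_congr rfl fun i _ => ?_
      rw [Fintype.sum_prod_type]
      exact (key i).symm
    calc ρ = twirl μ ρ := hinv.symm
      _ = twirl μ (∑ j, ((σ (e j).1 (e j).2.1 * τ (e j).1 (e j).2.2 : ℝ) : ℂ) •
          (vecMulVec (x (e j).1 (e j).2.1) (star (y (e j).1 (e j).2.1)) ⊗ₖ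
            vecMulVec (a (e j).1 (e j).2.2) (star (b (e j).1 (e j).2.2)))) := by rw [hsum0]
      _ = _ := twirl_sum μ _ _
  · -- cost bound
    have h1 : ∀ j, (σ (e j).1 (e j).2.1 * τ (e j).1 (e j).2.2) *
        gcn (vecMulVec (x (e j).1 (e j).2.1) (star (y (e j).1 (e j).2.1)) ⊗ₖ
          vecMulVec (a (e j).1 (e j).2.2) (star (b (e j).1 (e j).2.2)))
        ≤ σ (e j).1 (e j).2.1 * τ (e j).1 (e j).2.2 := by
      intro j
      have h2 : gcn (vecMulVec (x (e j).1 (e j).2.1) (star (y (e j).1 (e j).2.1)) ⊗ₖ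
          vecMulVec (a (e j).1 (e j).2.2) (star (b (e j).1 (e j).2.2))) ≤ 1 := by
        refine (gcn_le_kron _ _).trans ?_
        rw [traceNorm_outer_unit (hx _ _) (hy _ _), traceNorm_outer_unit (ha _ _) (hb _ _)]
        norm_num
      calc _ ≤ (σ (e j).1 (e j).2.1 * τ (e j).1 (e j).2.2) * 1 :=
            mul_le_mul_of_nonneg_left h2 (mul_nonneg (hσ0 _ _) (hτ0 _ _))
        _ = _ := mul_one _
    refine (Finset.sum_le_sum fun j _ => h1 j).trans ?_
    rw [Fintype.sum_equiv e _ (fun t => σ t.1 t.2.1 * τ t.1 t.2.2) (fun j => rfl)]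
    rw [Fintype.sum_prod_type]
    have h3 : ∀ i, (∑ s : Fin d × Fin d, σ i s.1 * τ i s.2)
        = traceNorm (u i) * traceNorm (v i) := by
      intro i
      rw [Fintype.sum_prod_type, ← Finset.sum_mul_sum, ← htru i, ← htrv i]
    rw [Finset.sum_congr rfl fun i _ => h3 i]
    exact le_of_eq hcost.symm

end BetaAux

/-- For a Werner state `ρ_f`, the quantity `β(ρ_f)` (infimum of `Σᵢ λᵢ ‖Sᵢ‖_γ` over
decompositions `ρ_f = Σᵢ λᵢ P_G(Sᵢ)` with `λᵢ ≥ 0` and `Sᵢ` of rank one, `P_G` the twirl with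
respect to the normalized Haar measure on the unitary group `U(d)`) equals `‖ρ_f‖_γ`. -/
theorem beta_eq_gcn_werner (d : ℕ) (hd : 2 ≤ d) (f : ℝ) (hf : -1 ≤ f ∧ f ≤ 1)
    [MeasurableSpace (Matrix.unitaryGroup (Fin d) ℂ)]
    [BorelSpace (Matrix.unitaryGroup (Fin d) ℂ)]
    (μ : Measure (Matrix.unitaryGroup (Fin d) ℂ))
    [μ.IsHaarMeasure] [IsProbabilityMeasure μ] :
    sInf { r : ℝ | ∃ (n : ℕ) (lam : Fin n → ℝ)
        (S : Fin n → Matrix (Fin d × Fin d) (Fin d × Fin d) ℂ),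
        (∀ i, 0 ≤ lam i) ∧ (∀ i, (S i).rank = 1) ∧
        wernerState d f = ∑ i, ((lam i : ℝ) : ℂ) • twirl μ (S i) ∧
        r = ∑ i, lam i * gcn (S i) } = gcn (wernerState d f) := by
  classical
  haveI : CompactSpace (Matrix.unitaryGroup (Fin d) ℂ) := BetaAux.compactSpace_unitaryGroup d
  have hd0 : 0 < d := by omega
  have hinv : twirl μ (wernerState d f) = wernerState d f := BetaAux.twirl_werner μ f
  set Bset : Set ℝ := { r : ℝ | ∃ (n : ℕ) (lam : Fin n → ℝ)
      (S : Fin n → Matrix (Fin d × Fin d) (Fin d × Fin d) ℂ),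
      (∀ i, 0 ≤ lam i) ∧ (∀ i, (S i).rank = 1) ∧
      wernerState d f = ∑ i, ((lam i : ℝ) : ℂ) • twirl μ (S i) ∧
      r = ∑ i, lam i * gcn (S i) } with hBset
  have hBbdd : BddBelow Bset := by
    refine ⟨0, fun r hr => ?_⟩
    obtain ⟨n, lam, S, hlam, -, -, rfl⟩ := hr
    exact Finset.sum_nonneg fun i _ => mul_nonneg (hlam i) (BetaAux.gcn_nonneg _)
  have hconstr : ∀ r ∈ BetaAux.gSet (wernerState d f), ∃ r' ∈ Bset, r' ≤ r := by
    intro r hr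
    obtain ⟨m, lam, S, h1, h2, h3, h4⟩ := BetaAux.exists_beta_decomp hd0 μ hinv hr
    exact ⟨∑ i, lam i * gcn (S i), ⟨m, lam, S, h1, h2, h3, rfl⟩, h4⟩
  have hBne : Bset.Nonempty := by
    obtain ⟨r, hr⟩ := BetaAux.gSet_nonempty (wernerState d f)
    obtain ⟨r', hr', -⟩ := hconstr r hr
    exact ⟨r', hr'⟩
  refine le_antisymm ?_ ?_
  · rw [BetaAux.gcn_eq_sInf]
    refine le_csInf (BetaAux.gSet_nonempty _) fun r hr => ?_
    obtain ⟨r', hr', hle⟩ := hconstr r hr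
    exact (csInf_le hBbdd hr').trans hle
  · refine le_csInf hBne fun r hr => ?_
    obtain ⟨n, lam, S, hlam, hrank, hsum, rfl⟩ := hr
    calc gcn (wernerState d f) = gcn (∑ i, ((lam i : ℝ) : ℂ) • twirl μ (S i)) := by rw [← hsum]
      _ ≤ ∑ i, gcn (((lam i : ℝ) : ℂ) • twirl μ (S i)) := BetaAux.gcn_sum_le _
      _ ≤ ∑ i, lam i * gcn (S i) := by
          refine Finset.sum_le_sum fun i _ => ?_
          refine (BetaAux.gcn_smul_le _ _).trans ?_
          rw [Complex.norm_real, Real.norm_eq_abs, abs_of_nonneg (hlam i)]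
          exact mul_le_mul_of_nonneg_left (BetaAux.gcn_twirl_le μ (S i)) (hlam i)
end

section
/- Let σ be a Hermitian complex matrix on ℂ^d ⊗ ℂ^d. Then ‖σ‖_S = inf { a₊ + a₋ : a₊, a₋ ≥ 0, ρ₊ and ρ₋ separable density matrices on ℂ^d ⊗ ℂ^d, σ = a₊·ρ₊ − a₋·ρ₋ }. -/
open scoped Matrix Kronecker BigOperators ComplexOrder
open MeasureTheory

/-- The greatest cross norm `‖·‖_S` on Hermitian operators: infimum of `Σᵢ ‖uᵢ‖₁ ‖vᵢ‖₁` over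
finite decompositions into Kronecker products of Hermitian matrices. -/
noncomputable def gcnS {d₁ d₂ : ℕ} (t : Matrix (Fin d₁ × Fin d₂) (Fin d₁ × Fin d₂) ℂ) : ℝ :=
  sInf { r : ℝ | ∃ (n : ℕ) (u : Fin n → Matrix (Fin d₁) (Fin d₁) ℂ)
      (v : Fin n → Matrix (Fin d₂) (Fin d₂) ℂ),
      (∀ i, (u i).IsHermitian) ∧ (∀ i, (v i).IsHermitian) ∧
      t = ∑ i, u i ⊗ₖ v i ∧ r = ∑ i, traceNorm (u i) * traceNorm (v i) }

namespace Aux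
variable {n : Type*} [Fintype n] [DecidableEq n]

open scoped MatrixOrder in
lemma traceNorm_eq_sqrt (A : Matrix n n ℂ) : traceNorm A = (CFC.sqrt (Aᴴ * A)).trace.re := by
  have hM := Matrix.posSemidef_conjTranspose_mul_self A
  rw [CFC.sqrt_eq_cfc, cfc_nnreal_eq_real _ _ hM.nonneg, hM.1.cfc_eq]
  simp only [Matrix.IsHermitian.cfc, Unitary.conjStarAlgAut_apply]
  unfold traceNorm Real.sqrt
  rfl

open scoped MatrixOrder in
lemma sqrt_unique {A B : Matrix n n ℂ} (hA : A.PosSemidef) (hB : B.PosSemidef)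
    (h : B ^ 2 = A) : CFC.sqrt A = B :=
  CFC.sqrt_unique (by rw [← sq, h]) hB.nonneg

lemma psd_smul {A : Matrix n n ℂ} (hA : A.PosSemidef) {c : ℝ} (hc : 0 ≤ c) :
    ((c : ℂ) • A).PosSemidef := by
  constructor
  · rw [Matrix.IsHermitian, Matrix.conjTranspose_smul, hA.isHermitian.eq, Complex.star_def,
      Complex.conj_ofReal]
  · intro x
    exact (hA.smul (a := (c : ℂ)) (by exact_mod_cast hc)).2 x

lemma traceNorm_psd {A : Matrix n n ℂ} (hA : A.PosSemidef) : traceNorm A = A.trace.re := by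
  rw [traceNorm_eq_sqrt]
  rw [sqrt_unique (Matrix.posSemidef_conjTranspose_mul_self A) hA (by rw [pow_two, hA.isHermitian.eq])]

lemma psd_diag {A : Matrix n n ℂ} (hA : A.PosSemidef) (i : n) :
    A i i = ((A i i).re : ℂ) ∧ 0 ≤ (A i i).re := by
  have h := hA.dotProduct_mulVec_nonneg (Pi.single i 1)
  have h2 : star (Pi.single i 1) ⬝ᵥ A *ᵥ (Pi.single i 1 : n → ℂ) = A i i := by
    simp [dotProduct, Matrix.mulVec, Pi.single_apply, Finset.mul_sum]
  rw [h2] at h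
  obtain ⟨h3, h4⟩ := Complex.nonneg_iff.mp h
  exact ⟨Complex.ext (by simp) (by simp [← h4]), h3⟩

lemma psd_trace {A : Matrix n n ℂ} (hA : A.PosSemidef) :
    A.trace = (A.trace.re : ℂ) ∧ 0 ≤ A.trace.re := by
  have h1 : A.trace = ((∑ i, (A i i).re : ℝ) : ℂ) := by
    rw [Matrix.trace]
    push_cast
    exact Finset.sum_congr rfl fun i _ => (psd_diag hA i).1
  constructor
  · rw [h1]; simp
  · rw [h1]; simp only [Complex.ofReal_re]
    exact Finset.sum_nonneg fun i _ => (psd_diag hA i).2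

lemma trace_conj {U D : Matrix n n ℂ} (hU : star U * U = 1) :
    (U * D * star U).trace = D.trace := by
  rw [Matrix.trace_mul_cycle, hU, Matrix.one_mul]

lemma psd_trace_zero {A : Matrix n n ℂ} (hA : A.PosSemidef) (h : A.trace = 0) : A = 0 := by
  have hH := hA.isHermitian
  have hU : star (hH.eigenvectorUnitary : Matrix n n ℂ) * (hH.eigenvectorUnitary : Matrix n n ℂ)
      = 1 := by
    simpa using Matrix.mem_unitaryGroup_iff'.mp hH.eigenvectorUnitary.2
  have hspec := hH.spectral_theorem
  rw [Unitary.conjStarAlgAut_apply] at hspec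
  have htr := congrArg Matrix.trace hspec
  rw [trace_conj hU, h, Matrix.trace_diagonal] at htr
  have hsum : ∑ i, hH.eigenvalues i = 0 := by
    have h2 : ((∑ i, hH.eigenvalues i : ℝ) : ℂ) = 0 := by
      push_cast
      exact htr.symm
    exact_mod_cast h2
  have hz : ∀ i ∈ Finset.univ, hH.eigenvalues i = 0 :=
    (Finset.sum_eq_zero_iff_of_nonneg (fun i _ => hA.eigenvalues_nonneg i)).mp hsum
  have hd : Matrix.diagonal (RCLike.ofReal ∘ hH.eigenvalues) = (0 : Matrix n n ℂ) := by
    ext i j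
    rcases eq_or_ne i j with rfl | hij
    · simp [hz i (Finset.mem_univ i)]
    · simp [Matrix.diagonal_apply_ne _ hij]
  rw [hspec, hd, Matrix.mul_zero, Matrix.zero_mul]

open scoped MatrixOrder in
lemma traceNorm_real_smul (c : ℝ) (A : Matrix n n ℂ) :
    traceNorm ((c : ℂ) • A) = |c| * traceNorm A := by
  rw [traceNorm_eq_sqrt, traceNorm_eq_sqrt]
  have h : (((c:ℂ) • A)ᴴ * ((c:ℂ) • A)) = ((c^2 : ℝ) : ℂ) • (Aᴴ * A) := by
    rw [Matrix.conjTranspose_smul, Matrix.smul_mul, Matrix.mul_smul, smul_smul]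
    congr 1
    rw [Complex.star_def, Complex.conj_ofReal]
    push_cast
    ring
  have hB : CFC.sqrt (((c:ℂ) • A)ᴴ * ((c:ℂ) • A))
      = ((|c| : ℝ) : ℂ) • CFC.sqrt (Aᴴ * A) := by
    refine sqrt_unique (Matrix.posSemidef_conjTranspose_mul_self _)
      (psd_smul (Matrix.nonneg_iff_posSemidef.mp (CFC.sqrt_nonneg (Aᴴ * A))) (abs_nonneg c)) ?_
    rw [smul_pow, CFC.sq_sqrt (Aᴴ * A) (Matrix.posSemidef_conjTranspose_mul_self A).nonneg, h]
    congr 1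
    push_cast
    rw [← Complex.ofReal_pow, ← Complex.ofReal_pow, sq_abs]
  rw [hB, Matrix.trace_smul]
  simp [Complex.ofReal_re, Complex.ofReal_mul]

lemma traceNorm_density {A : Matrix n n ℂ} (hA : A.PosSemidef) (h1 : A.trace = 1) :
    traceNorm A = 1 := by
  rw [traceNorm_psd hA, h1]
  simp

lemma rcl (x : ℝ) : (RCLike.ofReal x : ℂ) = (x : ℂ) := rfl

lemma conj_mul {U D1 D2 : Matrix n n ℂ} (hU : star U * U = 1) :
    (U * D1 * star U) * (U * D2 * star U) = U * (D1 * D2) * star U := by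
  have h : star U * (U * D2 * star U) = D2 * star U := by
    rw [← Matrix.mul_assoc, ← Matrix.mul_assoc, hU, Matrix.one_mul]
  rw [Matrix.mul_assoc (U * D1), h]
  simp only [Matrix.mul_assoc]

/-- Jordan-type decomposition of a Hermitian matrix. -/
lemma hermitian_decomp {A : Matrix n n ℂ} (hA : A.IsHermitian) :
    ∃ P N : Matrix n n ℂ, P.PosSemidef ∧ N.PosSemidef ∧ A = P - N ∧
      traceNorm A = P.trace.re + N.trace.re := by
  classical
  set U : Matrix n n ℂ := (hA.eigenvectorUnitary : Matrix n n ℂ) with hUdef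
  have hU : star U * U = 1 := Matrix.UnitaryGroup.star_mul_self hA.eigenvectorUnitary
  set lam := hA.eigenvalues with hlam
  set P := U * Matrix.diagonal (fun i => ((max (lam i) 0 : ℝ) : ℂ)) * star U with hP
  set N := U * Matrix.diagonal (fun i => ((max (-(lam i)) 0 : ℝ) : ℂ)) * star U with hN
  have hdiagpsd : ∀ f : n → ℝ, (∀ i, 0 ≤ f i) →
      (U * Matrix.diagonal (fun i => ((f i : ℝ) : ℂ)) * star U).PosSemidef := by
    intro f hf
    refine Matrix.PosSemidef.mul_mul_conjTranspose_same ?_ U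
    refine Matrix.posSemidef_diagonal_iff.mpr fun i => ?_
    exact Complex.zero_le_real.mpr (hf i)
  have hPpsd : P.PosSemidef := hdiagpsd _ fun i => le_max_right _ _
  have hNpsd : N.PosSemidef := hdiagpsd _ fun i => le_max_right _ _
  have hdd : Matrix.diagonal (fun i => ((max (lam i) 0 : ℝ) : ℂ))
      - Matrix.diagonal (fun i => ((max (-(lam i)) 0 : ℝ) : ℂ))
      = Matrix.diagonal (RCLike.ofReal ∘ lam) := by
    ext i j
    rcases eq_or_ne i j with rfl | hij
    · simp only [Matrix.sub_apply, Matrix.diagonal_apply_eq, Function.comp]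
      have hre : max (lam i) 0 - max (-lam i) 0 = lam i := by
        rcases le_total 0 (lam i) with h | h
        · rw [max_eq_left h, max_eq_right (neg_nonpos_of_nonneg h), sub_zero]
        · rw [max_eq_right h, max_eq_left (neg_nonneg_of_nonpos h), zero_sub, neg_neg]
      simp only [rcl]
      exact_mod_cast hre
    · simp [Matrix.diagonal_apply_ne _ hij]
  have hsub : A = P - N := by
    rw [hP, hN, ← Matrix.sub_mul, ← Matrix.mul_sub, hdd]
    exact hA.spectral_theorem
  have habs : traceNorm A = ∑ i, |lam i| := by
    rw [traceNorm_eq_sqrt]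
    have hsq : (U * Matrix.diagonal (fun i => ((|lam i| : ℝ) : ℂ)) * star U) ^ 2 = Aᴴ * A := by
      rw [hA.eq, pow_two, conj_mul hU, Matrix.diagonal_mul_diagonal]
      conv_rhs => rw [hA.spectral_theorem, Unitary.conjStarAlgAut_apply]
      rw [conj_mul hU, Matrix.diagonal_mul_diagonal]
      have heq : (fun i => ((|lam i| : ℝ) : ℂ) * ((|lam i| : ℝ) : ℂ))
          = fun i => (RCLike.ofReal ∘ lam) i * (RCLike.ofReal ∘ lam) i := by
        funext i
        simp only [Function.comp, rcl]
        norm_cast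
        exact abs_mul_abs_self (lam i)
      rw [heq]
    rw [sqrt_unique (Matrix.posSemidef_conjTranspose_mul_self A) (hdiagpsd _ fun i => abs_nonneg _) hsq, trace_conj hU,
      Matrix.trace_diagonal]
    push_cast
    simp
  refine ⟨P, N, hPpsd, hNpsd, hsub, ?_⟩
  have hPt : P.trace.re = ∑ i, max (lam i) 0 := by
    rw [hP, trace_conj hU, Matrix.trace_diagonal]
    push_cast
    simp
  have hNt : N.trace.re = ∑ i, max (-(lam i)) 0 := by
    rw [hN, trace_conj hU, Matrix.trace_diagonal]
    push_cast
    simp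
  rw [habs, hPt, hNt, ← Finset.sum_add_distrib]
  refine Finset.sum_congr rfl fun i _ => ?_
  rcases le_total 0 (lam i) with h | h
  · rw [abs_of_nonneg h, max_eq_left h, max_eq_right (neg_nonpos_of_nonneg h), add_zero]
  · rw [abs_of_nonpos h, max_eq_right h, max_eq_left (neg_nonneg_of_nonpos h), zero_add]

lemma herm_real_smul {A : Matrix n n ℂ} (hA : A.IsHermitian) (c : ℝ) :
    ((c : ℂ) • A).IsHermitian := by
  rw [Matrix.IsHermitian, Matrix.conjTranspose_smul, hA.eq, Complex.star_def, Complex.conj_ofReal]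

lemma traceNorm_isEmpty [IsEmpty n] (A : Matrix n n ℂ) : traceNorm A = 0 := by
  unfold traceNorm
  rw [Matrix.trace_eq_zero_of_isEmpty]
  simp

variable {m : Type*} [Fintype m] [DecidableEq m]

lemma kron_conjTranspose (A : Matrix n n ℂ) (B : Matrix m m ℂ) :
    (A ⊗ₖ B)ᴴ = Aᴴ ⊗ₖ Bᴴ := by
  ext ⟨i, j⟩ ⟨k, l⟩
  simp [Matrix.conjTranspose_apply, Matrix.kroneckerMap_apply, mul_comm]

lemma kron_psd {A : Matrix n n ℂ} {B : Matrix m m ℂ} (hA : A.PosSemidef) (hB : B.PosSemidef) :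
    (A ⊗ₖ B).PosSemidef := by
  exact hA.kronecker hB

lemma psd_sum {ι : Type*} (s : Finset ι) (f : ι → Matrix n n ℂ)
    (h : ∀ i ∈ s, (f i).PosSemidef) : (∑ i ∈ s, f i).PosSemidef :=
  Finset.sum_induction f Matrix.PosSemidef (fun _ _ ha hb => ha.add hb) Matrix.PosSemidef.zero h

lemma psd_normalize {X : Matrix n n ℂ} {E : Matrix n n ℂ}
    (hE : E.PosSemidef ∧ E.trace = 1) (hX : X.PosSemidef) :
    ∃ (w : ℝ) (D : Matrix n n ℂ), 0 ≤ w ∧ (D.PosSemidef ∧ D.trace = 1) ∧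
      X = (w : ℂ) • D ∧ (w : ℂ) = X.trace := by
  obtain ⟨htr, hnn⟩ := psd_trace hX
  rcases eq_or_ne X.trace.re 0 with h0 | h0
  · refine ⟨0, E, le_refl 0, hE, ?_, ?_⟩
    · rw [psd_trace_zero hX (by rw [htr, h0]; simp)]
      simp
    · rw [htr, h0]
  · refine ⟨X.trace.re, ((X.trace.re)⁻¹ : ℂ) • X, hnn, ⟨?_, ?_⟩, ?_, htr.symm⟩
    · exact_mod_cast psd_smul hX (inv_nonneg.mpr hnn)
    · rw [Matrix.trace_smul, htr, smul_eq_mul]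
      norm_cast
      exact inv_mul_cancel₀ h0
    · rw [smul_smul]
      norm_cast
      rw [mul_inv_cancel₀ h0]
      simp


lemma exists_default_density {d : ℕ} (hd : 0 < d) :
    ∃ D : Matrix (Fin d) (Fin d) ℂ, D.PosSemidef ∧ D.trace = 1 := by
  refine ⟨Matrix.diagonal (fun i => if i = ⟨0, hd⟩ then 1 else 0), ?_, ?_⟩
  · refine Matrix.posSemidef_diagonal_iff.mpr fun i => ?_
    split <;> simp
  · rw [Matrix.trace_diagonal]
    simp

/-- Normalize a sum of Kronecker products of PSD matrices into a separable density matrix. -/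
lemma sep_normalize {d : ℕ} (hd : 0 < d) {m : ℕ}
    (F G : Fin m → Matrix (Fin d) (Fin d) ℂ)
    (hF : ∀ i, (F i).PosSemidef) (hG : ∀ i, (G i).PosSemidef) :
    ∃ ρ : Matrix (Fin d × Fin d) (Fin d × Fin d) ℂ, IsDensityMatrix ρ ∧ IsSeparable' ρ ∧
      (∑ i, F i ⊗ₖ G i) = (((∑ i, F i ⊗ₖ G i).trace.re : ℝ) : ℂ) • ρ ∧
      0 ≤ (∑ i, F i ⊗ₖ G i).trace.re := by
  obtain ⟨E, hE⟩ := exists_default_density hd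
  set S : Matrix (Fin d × Fin d) (Fin d × Fin d) ℂ := ∑ i, F i ⊗ₖ G i with hSdef
  have hSpsd : S.PosSemidef := psd_sum _ _ fun i _ => kron_psd (hF i) (hG i)
  obtain ⟨hStr, hSnn⟩ := psd_trace hSpsd
  set t : ℝ := S.trace.re with ht
  rcases eq_or_ne t 0 with h0 | h0
  · have hS0 : S = 0 := psd_trace_zero hSpsd (by rw [hStr, h0]; simp)
    refine ⟨E ⊗ₖ E, ⟨kron_psd hE.1 hE.1, by rw [Matrix.trace_kronecker, hE.2, one_mul]⟩,
      ⟨1, fun _ => 1, fun _ => E, fun _ => E, fun _ => zero_le_one, fun _ => hE,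
        fun _ => hE, by simp⟩, ?_, h0.ge⟩
    rw [hS0, h0]
    simp
  · choose wF DF hwF hDF hFeq _ using fun i => psd_normalize hE (hF i)
    choose wG DG hwG hDG hGeq _ using fun i => psd_normalize hE (hG i)
    refine ⟨((t⁻¹ : ℝ) : ℂ) • S, ⟨psd_smul hSpsd (inv_nonneg.mpr hSnn), ?_⟩, ?_, ?_, hSnn⟩
    · rw [Matrix.trace_smul, hStr, smul_eq_mul]
      norm_cast
      exact inv_mul_cancel₀ h0
    · refine ⟨m, fun i => t⁻¹ * (wF i * wG i), DF, DG,
        fun i => mul_nonneg (inv_nonneg.mpr hSnn) (mul_nonneg (hwF i) (hwG i)),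
        hDF, hDG, ?_⟩
      rw [hSdef, Finset.smul_sum]
      refine Finset.sum_congr rfl fun i _ => ?_
      rw [hFeq i, hGeq i, Matrix.smul_kronecker, Matrix.kronecker_smul, smul_smul, smul_smul]
      congr 1
      push_cast
      ring
    · rw [smul_smul]
      norm_cast
      rw [mul_inv_cancel₀ h0]
      simp

end Aux

/-- Direction A: every κ-decomposition gives a Hermitian Kronecker decomposition of equal cost. -/
lemma kappa_mem_gcnS {d : ℕ} {σ : Matrix (Fin d × Fin d) (Fin d × Fin d) ℂ} {r : ℝ}
    (h : ∃ (ap am : ℝ) (ρp ρm : Matrix (Fin d × Fin d) (Fin d × Fin d) ℂ),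
      0 ≤ ap ∧ 0 ≤ am ∧ IsDensityMatrix ρp ∧ IsSeparable' ρp ∧
      IsDensityMatrix ρm ∧ IsSeparable' ρm ∧
      σ = (ap : ℂ) • ρp - (am : ℂ) • ρm ∧ r = ap + am) :
    ∃ (n : ℕ) (u : Fin n → Matrix (Fin d) (Fin d) ℂ) (v : Fin n → Matrix (Fin d) (Fin d) ℂ),
      (∀ i, (u i).IsHermitian) ∧ (∀ i, (v i).IsHermitian) ∧
      σ = ∑ i, u i ⊗ₖ v i ∧ r = ∑ i, traceNorm (u i) * traceNorm (v i) := by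
  obtain ⟨ap, am, ρp, ρm, hap, ham, hdp, hsp, hdm, hsm, hσe, hre⟩ := h
  obtain ⟨n₁, ω₁, α₁, β₁, hω₁, hα₁, hβ₁, hρp⟩ := hsp
  obtain ⟨n₂, ω₂, α₂, β₂, hω₂, hα₂, hβ₂, hρm⟩ := hsm
  have hsum1 : ∑ i, ω₁ i = 1 := by
    have h1 := hdp.2
    rw [hρp, Matrix.trace_sum] at h1
    have h2 : ∀ i, ((ω₁ i : ℂ) • (α₁ i ⊗ₖ β₁ i)).trace = (ω₁ i : ℂ) := by
      intro i
      simp [Matrix.trace_smul, Matrix.trace_kronecker, (hα₁ i).2, (hβ₁ i).2]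
    rw [Finset.sum_congr rfl fun i _ => h2 i] at h1
    exact_mod_cast h1
  have hsum2 : ∑ i, ω₂ i = 1 := by
    have h1 := hdm.2
    rw [hρm, Matrix.trace_sum] at h1
    have h2 : ∀ i, ((ω₂ i : ℂ) • (α₂ i ⊗ₖ β₂ i)).trace = (ω₂ i : ℂ) := by
      intro i
      simp [Matrix.trace_smul, Matrix.trace_kronecker, (hα₂ i).2, (hβ₂ i).2]
    rw [Finset.sum_congr rfl fun i _ => h2 i] at h1
    exact_mod_cast h1
  refine ⟨n₁ + n₂,
    Fin.addCases (fun i => ((ap * ω₁ i : ℝ) : ℂ) • α₁ i)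
      (fun i => ((-(am * ω₂ i) : ℝ) : ℂ) • α₂ i),
    Fin.addCases β₁ β₂, ?_, ?_, ?_, ?_⟩
  · intro i
    induction i using Fin.addCases with
    | left j => simpa only [Fin.addCases_left] using Aux.herm_real_smul (hα₁ j).1.isHermitian _
    | right j => simpa only [Fin.addCases_right] using Aux.herm_real_smul (hα₂ j).1.isHermitian _
  · intro i
    induction i using Fin.addCases with
    | left j => simpa only [Fin.addCases_left] using (hβ₁ j).1.isHermitian
    | right j => simpa only [Fin.addCases_right] using (hβ₂ j).1.isHermitian
  · rw [Fin.sum_univ_add]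
    simp only [Fin.addCases_left, Fin.addCases_right]
    rw [hσe, hρp, hρm, Finset.smul_sum, Finset.smul_sum, sub_eq_add_neg, ← Finset.sum_neg_distrib]
    congr 1
    · refine Finset.sum_congr rfl fun i _ => ?_
      rw [Matrix.smul_kronecker, smul_smul]
      norm_cast
    · refine Finset.sum_congr rfl fun i _ => ?_
      rw [Matrix.smul_kronecker, smul_smul]
      push_cast
      exact (neg_smul _ _).symm
  · rw [Fin.sum_univ_add]
    simp only [Fin.addCases_left, Fin.addCases_right]
    have e1 : ∀ i, traceNorm (((ap * ω₁ i : ℝ) : ℂ) • α₁ i) * traceNorm (β₁ i)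
        = ap * ω₁ i := by
      intro i
      rw [Aux.traceNorm_real_smul, Aux.traceNorm_density (hα₁ i).1 (hα₁ i).2,
        Aux.traceNorm_density (hβ₁ i).1 (hβ₁ i).2,
        abs_of_nonneg (mul_nonneg hap (hω₁ i))]
      ring
    have e2 : ∀ i, traceNorm (((-(am * ω₂ i) : ℝ) : ℂ) • α₂ i) * traceNorm (β₂ i)
        = am * ω₂ i := by
      intro i
      rw [Aux.traceNorm_real_smul, Aux.traceNorm_density (hα₂ i).1 (hα₂ i).2,
        Aux.traceNorm_density (hβ₂ i).1 (hβ₂ i).2, abs_neg,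
        abs_of_nonneg (mul_nonneg ham (hω₂ i))]
      ring
    rw [Finset.sum_congr rfl fun i _ => e1 i, Finset.sum_congr rfl fun i _ => e2 i,
      ← Finset.mul_sum, ← Finset.mul_sum, hsum1, hsum2, mul_one, mul_one, hre]

/-- Direction B: every Hermitian Kronecker decomposition gives a κ-decomposition of equal cost. -/
lemma gcnS_mem_kappa {d : ℕ} (hd : 0 < d) {σ : Matrix (Fin d × Fin d) (Fin d × Fin d) ℂ} {r : ℝ}
    (h : ∃ (n : ℕ) (u : Fin n → Matrix (Fin d) (Fin d) ℂ) (v : Fin n → Matrix (Fin d) (Fin d) ℂ),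
      (∀ i, (u i).IsHermitian) ∧ (∀ i, (v i).IsHermitian) ∧
      σ = ∑ i, u i ⊗ₖ v i ∧ r = ∑ i, traceNorm (u i) * traceNorm (v i)) :
    ∃ (ap am : ℝ) (ρp ρm : Matrix (Fin d × Fin d) (Fin d × Fin d) ℂ),
      0 ≤ ap ∧ 0 ≤ am ∧ IsDensityMatrix ρp ∧ IsSeparable' ρp ∧
      IsDensityMatrix ρm ∧ IsSeparable' ρm ∧
      σ = (ap : ℂ) • ρp - (am : ℂ) • ρm ∧ r = ap + am := by
  obtain ⟨n, u, v, hu, hv, hσe, hre⟩ := h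
  choose Pu Nu hPu hNu hPNu htu using fun i => Aux.hermitian_decomp (hu i)
  choose Pv Nv hPv hNv hPNv htv using fun i => Aux.hermitian_decomp (hv i)
  set F : Fin (n + n) → Matrix (Fin d) (Fin d) ℂ := Fin.addCases Pu Nu with hF
  set Gp : Fin (n + n) → Matrix (Fin d) (Fin d) ℂ := Fin.addCases Pv Nv with hGp
  set Gm : Fin (n + n) → Matrix (Fin d) (Fin d) ℂ := Fin.addCases Nv Pv with hGm
  have hFpsd : ∀ i, (F i).PosSemidef := by
    intro i
    induction i using Fin.addCases with
    | left j => simpa only [hF, Fin.addCases_left] using hPu j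
    | right j => simpa only [hF, Fin.addCases_right] using hNu j
  have hGppsd : ∀ i, (Gp i).PosSemidef := by
    intro i
    induction i using Fin.addCases with
    | left j => simpa only [hGp, Fin.addCases_left] using hPv j
    | right j => simpa only [hGp, Fin.addCases_right] using hNv j
  have hGmpsd : ∀ i, (Gm i).PosSemidef := by
    intro i
    induction i using Fin.addCases with
    | left j => simpa only [hGm, Fin.addCases_left] using hNv j
    | right j => simpa only [hGm, Fin.addCases_right] using hPv j
  obtain ⟨ρp, hρpD, hρpS, hPeq, hPnn⟩ := Aux.sep_normalize hd F Gp hFpsd hGppsd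
  obtain ⟨ρm, hρmD, hρmS, hQeq, hQnn⟩ := Aux.sep_normalize hd F Gm hFpsd hGmpsd
  refine ⟨(∑ i, F i ⊗ₖ Gp i).trace.re, (∑ i, F i ⊗ₖ Gm i).trace.re, ρp, ρm,
    hPnn, hQnn, hρpD, hρpS, hρmD, hρmS, ?_, ?_⟩
  · rw [← hPeq, ← hQeq, hσe]
    rw [Fin.sum_univ_add]
    simp only [hF, hGp, hGm, Fin.addCases_left, Fin.addCases_right]
    rw [Fin.sum_univ_add]
    simp only [Fin.addCases_left, Fin.addCases_right]
    have key : ∀ i, u i ⊗ₖ v i = (Pu i ⊗ₖ Pv i + Nu i ⊗ₖ Nv i)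
        - (Pu i ⊗ₖ Nv i + Nu i ⊗ₖ Pv i) := by
      intro i
      rw [hPNu i, hPNv i]
      ext ⟨a, b⟩ ⟨c, e⟩
      simp only [Matrix.kroneckerMap_apply, Matrix.sub_apply, Matrix.add_apply]
      ring
    rw [Finset.sum_congr rfl fun i _ => key i, Finset.sum_sub_distrib,
      Finset.sum_add_distrib, Finset.sum_add_distrib]
  · have trace_sum_kron : ∀ (X Y : Fin n → Matrix (Fin d) (Fin d) ℂ),
        (∀ i, (X i).PosSemidef) → (∀ i, (Y i).PosSemidef) →
        (∑ i, X i ⊗ₖ Y i).trace.re = ∑ i, (X i).trace.re * (Y i).trace.re := by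
      intro X Y hX hY
      have : (∑ i, X i ⊗ₖ Y i).trace
          = ((∑ i, (X i).trace.re * (Y i).trace.re : ℝ) : ℂ) := by
        rw [Matrix.trace_sum, Finset.sum_congr rfl fun i (_ : i ∈ Finset.univ) => by
          rw [Matrix.trace_kronecker, (Aux.psd_trace (hX i)).1, (Aux.psd_trace (hY i)).1]]
        norm_cast
      rw [this, Complex.ofReal_re]
    have hsplit : ∀ (Y : Fin n → Matrix (Fin d) (Fin d) ℂ) (Z : Fin n → Matrix (Fin d) (Fin d) ℂ),
        (∑ i : Fin (n + n), F i ⊗ₖ (Fin.addCases Y Z : Fin (n+n) → _) i).trace.re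
        = (∑ i : Fin n, Pu i ⊗ₖ Y i).trace.re + (∑ i : Fin n, Nu i ⊗ₖ Z i).trace.re := by
      intro Y Z
      rw [Fin.sum_univ_add]
      simp only [hF, Fin.addCases_left, Fin.addCases_right]
      rw [Matrix.trace_add, Complex.add_re]
    have h1 : (∑ i : Fin (n+n), F i ⊗ₖ Gp i).trace.re
        = ∑ i : Fin n, (Pu i).trace.re * (Pv i).trace.re
          + ∑ i : Fin n, (Nu i).trace.re * (Nv i).trace.re := by
      rw [hGp, hsplit Pv Nv, trace_sum_kron Pu Pv hPu hPv, trace_sum_kron Nu Nv hNu hNv]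
    have h2 : (∑ i : Fin (n+n), F i ⊗ₖ Gm i).trace.re
        = ∑ i : Fin n, (Pu i).trace.re * (Nv i).trace.re
          + ∑ i : Fin n, (Nu i).trace.re * (Pv i).trace.re := by
      rw [hGm, hsplit Nv Pv, trace_sum_kron Pu Nv hPu hNv, trace_sum_kron Nu Pv hNu hPv]
    rw [h1, h2, hre]
    rw [Finset.sum_congr rfl fun i (_ : i ∈ Finset.univ) => by rw [htu i, htv i]]
    rw [← Finset.sum_add_distrib, ← Finset.sum_add_distrib, ← Finset.sum_add_distrib]
    refine Finset.sum_congr rfl fun i _ => ?_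
    ring
/-- For Hermitian `σ` on `ℂ^d ⊗ ℂ^d`, `‖σ‖_S` equals the infimum of `a₊ + a₋` over
decompositions `σ = a₊ ρ₊ − a₋ ρ₋` into separable density matrices with `a± ≥ 0`. -/
theorem gcnS_eq_kappa (d : ℕ) (σ : Matrix (Fin d × Fin d) (Fin d × Fin d) ℂ)
    (hσ : σ.IsHermitian) :
    gcnS σ = sInf { r : ℝ | ∃ (ap am : ℝ)
        (ρp ρm : Matrix (Fin d × Fin d) (Fin d × Fin d) ℂ),
        0 ≤ ap ∧ 0 ≤ am ∧
        IsDensityMatrix ρp ∧ IsSeparable' ρp ∧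
        IsDensityMatrix ρm ∧ IsSeparable' ρm ∧
        σ = (ap : ℂ) • ρp - (am : ℂ) • ρm ∧ r = ap + am } := by
  rcases Nat.eq_zero_or_pos d with rfl | hd
  · -- degenerate case `d = 0`: both sets have infimum `0`
    have hset2 : { r : ℝ | ∃ (ap am : ℝ)
        (ρp ρm : Matrix (Fin 0 × Fin 0) (Fin 0 × Fin 0) ℂ),
        0 ≤ ap ∧ 0 ≤ am ∧
        IsDensityMatrix ρp ∧ IsSeparable' ρp ∧
        IsDensityMatrix ρm ∧ IsSeparable' ρm ∧
        σ = (ap : ℂ) • ρp - (am : ℂ) • ρm ∧ r = ap + am } = (∅ : Set ℝ) := by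
      ext r
      simp only [Set.mem_setOf_eq, Set.mem_empty_iff_false, iff_false, not_exists]
      rintro ap am ρp ρm ⟨_, _, ⟨_, htr⟩, _⟩
      have h0 : ρp.trace = 0 := Matrix.trace_eq_zero_of_isEmpty ρp
      exact one_ne_zero (htr ▸ h0)
    have hset1 : { r : ℝ | ∃ (n : ℕ) (u : Fin n → Matrix (Fin 0) (Fin 0) ℂ)
        (v : Fin n → Matrix (Fin 0) (Fin 0) ℂ),
        (∀ i, (u i).IsHermitian) ∧ (∀ i, (v i).IsHermitian) ∧
        σ = ∑ i, u i ⊗ₖ v i ∧ r = ∑ i, traceNorm (u i) * traceNorm (v i) }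
        = {(0 : ℝ)} := by
      ext r
      simp only [Set.mem_setOf_eq, Set.mem_singleton_iff]
      constructor
      · rintro ⟨n, u, v, _, _, _, hre⟩
        have hz : ∀ i, traceNorm (u i) = 0 := fun i => Aux.traceNorm_isEmpty _
        simp [hre, hz]
      · rintro rfl
        refine ⟨0, fun i => i.elim0, fun i => i.elim0, fun i => i.elim0, fun i => i.elim0,
          ?_, by simp⟩
        ext p q
        exact p.1.elim0
    unfold gcnS
    rw [hset1, hset2, csInf_singleton, Real.sInf_empty]
  · unfold gcnS
    congr 1
    ext r
    simp only [Set.mem_setOf_eq]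
    exact ⟨fun h => gcnS_mem_kappa hd h, fun h => kappa_mem_gcnS h⟩
end
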